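/- arXiv:1903.01172 — 6 statements merged into one kernel-verified Lean document; each statement's English description precedes it below -/
import Mathlib

section
/- Let (Z_n)_{n≥1} be a sequence of independent standard normal random variables. Then the partial sums ∑_{n=1}^N Z_n^2 / ((n - 1/2)π) diverge to +∞ as N → ∞ almost surely. -/
/-!
By the strong law of large numbers applied to `Z n ^ 2`, almost surely the averages
`(1/N) ∑_{n ≤ N} Z_n²` tend to `E[Z²] = 1`. For a nonnegative sequence `b` whose averages tend to
`m > 0`, the dyadic blocks `∑_{n ≤ j < 2n} b j / (j + 1)` are at least `(S (2n) - S n) / (2n)`,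
which tends to `m / 2`; hence the monotone partial sums of `b j / (j + 1)` cannot converge.
The weights `1 / ((n - 1/2) π)` dominate `1 / (π n)`.
-/

open MeasureTheory ProbabilityTheory Filter Finset Topology

theorem tendsto_sum_div_succ_atTop_of_tendsto_average {b : ℕ → ℝ} (hb : ∀ n, 0 ≤ b n) {m : ℝ}
    (hm : 0 < m) (h : Tendsto (fun n : ℕ => (∑ i ∈ range n, b i) / n) atTop (𝓝 m)) :
    Tendsto (fun N : ℕ => ∑ n ∈ range N, b n / (n + 1)) atTop atTop := by
  set S : ℕ → ℝ := fun n => ∑ i ∈ range n, b i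
  set T : ℕ → ℝ := fun N => ∑ n ∈ range N, b n / (n + 1)
  have hmono : Monotone T := fun N M hNM =>
    sum_le_sum_of_subset_of_nonneg (range_subset_range.2 hNM) fun n _ _ => by
      have := hb n; positivity
  have hblock : ∀ n, (S (2 * n) - S n) / (2 * n) ≤ T (2 * n) - T n := by
    intro n
    simp only [S, T, ← sum_Ico_eq_sub _ (by omega : n ≤ 2 * n), sum_div]
    refine sum_le_sum fun j hj => div_le_div_of_nonneg_left (hb j) (by positivity) ?_
    have : j + 1 ≤ 2 * n := (mem_Ico.1 hj).2
    exact_mod_cast this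
  have h2n : Tendsto (fun n : ℕ => 2 * n) atTop atTop :=
    tendsto_atTop_mono (fun n => Nat.le_mul_of_pos_left n two_pos) tendsto_id
  have hblock_lim : Tendsto (fun n : ℕ => (S (2 * n) - S n) / (2 * n)) atTop (𝓝 (m / 2)) := by
    have h2 : Tendsto (fun n : ℕ => S (2 * n) / (2 * n : ℝ)) atTop (𝓝 m) := by
      simpa [Function.comp_def] using h.comp h2n
    convert h2.sub (h.div_const 2) using 1
    -- `ring` also covers `n = 0`, where `x / 0 = 0` makes both sides vanish
    · ext n; simp only [S]; ring
    · congr 1; ring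
  by_contra hT
  have hbdd : BddAbove (Set.range T) := not_not.1 (mt (tendsto_atTop_atTop_of_monotone' hmono) hT)
  have hL := tendsto_atTop_ciSup hmono hbdd
  have hgap : Tendsto (fun n => T (2 * n) - T n) atTop (𝓝 0) := by
    simpa using (hL.comp h2n).sub hL
  linarith [le_of_tendsto_of_tendsto' hblock_lim hgap hblock]

lemma integral_sq_gaussianReal (μ : ℝ) (v : NNReal) : ∫ x, x ^ 2 ∂gaussianReal μ v = μ ^ 2 + v := by
  have h := variance_eq_sub (memLp_id_gaussianReal (μ := μ) (v := v) 2)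
  rw [variance_id_gaussianReal] at h
  simp only [Pi.pow_apply, id_eq] at h
  rw [integral_id_gaussianReal] at h
  linarith

theorem ae_tendsto_average_comp_of_map_eq {Ω E : Type*} [MeasurableSpace Ω] [MeasurableSpace E]
    {P : Measure Ω} {μ : Measure E} {X : ℕ → Ω → E} (hX : ∀ n, AEMeasurable (X n) P)
    (hindep : Pairwise fun i j => IndepFun (X i) (X j) P) (hlaw : ∀ n, P.map (X n) = μ)
    {f : E → ℝ} (hf : Measurable f) (hfint : Integrable f μ) :
    ∀ᵐ ω ∂P, Tendsto (fun n : ℕ => (∑ i ∈ range n, f (X i ω)) / n) atTop (𝓝 (∫ x, f x ∂μ)) := by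
  have hint : Integrable (f ∘ X 0) P := by
    rwa [← integrable_map_measure hf.aestronglyMeasurable (hX 0), hlaw]
  have hmean : P[f ∘ X 0] = ∫ x, f x ∂μ := by
    rw [← hlaw 0, integral_map (hX 0) hf.aestronglyMeasurable]; rfl
  have hident : ∀ i, IdentDistrib (X i) (X 0) P P := fun i => ⟨hX i, hX 0, by rw [hlaw, hlaw]⟩
  rw [← hmean]
  exact strong_law_ae_real (fun n => f ∘ X n) hint
    (fun i j hij => (hindep hij).comp hf hf) (fun i => (hident i).comp hf)

theorem stmt0_general {Ω : Type*} [MeasurableSpace Ω] (P : Measure Ω) [IsProbabilityMeasure P]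
    (Z : ℕ → Ω → ℝ)
    (hindep : iIndepFun Z P)
    (hlaw : ∀ n, P.map (Z n) = gaussianReal 0 1) :
    ∀ᵐ ω ∂P, Tendsto (fun N => ∑ n ∈ Finset.range N,
      (Z (n + 1) ω) ^ 2 / ((((n : ℝ) + 1) - 1 / 2) * Real.pi)) atTop atTop := by
  have hZ : ∀ n, AEMeasurable (Z n) P := fun n =>
    .of_map_ne_zero (by rw [hlaw]; exact IsProbabilityMeasure.ne_zero _)
  have hlln := ae_tendsto_average_comp_of_map_eq (X := fun n => Z (n + 1)) (fun n => hZ _)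
    (fun i j hij => hindep.indepFun (by omega)) (fun n => hlaw _) (f := fun x => x ^ 2)
    (by fun_prop) (memLp_id_gaussianReal 2).integrable_sq
  rw [integral_sq_gaussianReal] at hlln
  filter_upwards [hlln] with ω hω
  have hdiv := tendsto_sum_div_succ_atTop_of_tendsto_average (fun n => sq_nonneg (Z (n + 1) ω))
    one_pos (by simpa using hω)
  refine tendsto_atTop_mono (fun N => ?_) (hdiv.const_mul_atTop (inv_pos.2 Real.pi_pos))
  rw [mul_sum]
  refine sum_le_sum fun n _ => ?_
  have hn : (0 : ℝ) ≤ n := n.cast_nonneg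
  rw [inv_mul_eq_div, div_div]
  exact div_le_div_of_nonneg_left (sq_nonneg _) (mul_pos (by linarith) Real.pi_pos)
    (by gcongr; linarith)

/-- If `(Z n)` are independent standard normal random variables, then the
partial sums `∑_{n=1}^N Z_n² / ((n - 1/2)π)` diverge to `+∞` almost surely. -/
theorem stmt0 {Ω : Type*} [MeasurableSpace Ω] (P : Measure Ω) [IsProbabilityMeasure P]
    (Z : ℕ → Ω → ℝ) (hmeas : ∀ n, Measurable (Z n))
    (hindep : iIndepFun Z P)
    (hlaw : ∀ n, P.map (Z n) = gaussianReal 0 1) :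
    ∀ᵐ ω ∂P, Tendsto (fun N => ∑ n ∈ Finset.range N,
      (Z (n + 1) ω) ^ 2 / ((((n : ℝ) + 1) - 1 / 2) * Real.pi)) atTop atTop :=
  stmt0_general P Z hindep hlaw
end

section
/- Let X : ℝ → U be a path admitting a Lévy area 𝕏 and a delayed Lévy area 𝕏(-r) with delay r > 0. Define Z_t := (X_t, X_{t-r}) ∈ U ⊕ U and the (U⊕U)⊗(U⊕U)-valued two-parameter function ℤ with block components ℤ^{11} = 𝕏, ℤ^{21} = 𝕏(-r), ℤ^{12}_{s,t} = X_{s,t} ⊗ X_{s-r,t-r} - 𝕏(-r)^⊤_{s,t} (i.e. (ℤ^{12})^{ij}_{s,t} = X^i_{s,t} X^j_{s-r,t-r} - 𝕏(-r)^{ji}_{s,t}), and ℤ^{22}_{s,t} = 𝕏_{s-r,t-r}. Then ℤ satisfies Chen's relation for Z: ℤ_{s,t} = ℤ_{s,u} + ℤ_{u,t} + Z_{s,u} ⊗ Z_{u,t} for all s, u, t. -/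
open TensorProduct

lemma pair_tmul {U : Type*} [NormedAddCommGroup U] [NormedSpace ℝ U]
    (a b c d : U) :
    ((a, b) : U × U) ⊗ₜ[ℝ] ((c, d) : U × U) =
      TensorProduct.map (LinearMap.inl ℝ U U) (LinearMap.inl ℝ U U) (a ⊗ₜ[ℝ] c)
      + TensorProduct.map (LinearMap.inr ℝ U U) (LinearMap.inl ℝ U U) (b ⊗ₜ[ℝ] c)
      + TensorProduct.map (LinearMap.inl ℝ U U) (LinearMap.inr ℝ U U) (a ⊗ₜ[ℝ] d)
      + TensorProduct.map (LinearMap.inr ℝ U U) (LinearMap.inr ℝ U U) (b ⊗ₜ[ℝ] d) := by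
  have h1 : ((a, b) : U × U) = LinearMap.inl ℝ U U a + LinearMap.inr ℝ U U b := by simp
  have h2 : ((c, d) : U × U) = LinearMap.inl ℝ U U c + LinearMap.inr ℝ U U d := by simp
  rw [h1, h2]
  simp only [TensorProduct.add_tmul, TensorProduct.tmul_add, TensorProduct.map_tmul]
  abel

/-- If `X` admits a Lévy area `𝕏` and a delayed Lévy area `𝕏r = 𝕏(-r)`, then the
two-parameter function `𝒵` with block components `𝒵¹¹ = 𝕏`, `𝒵²¹ = 𝕏(-r)`,
`𝒵¹²_{s,t} = X_{s,t} ⊗ X_{s-r,t-r} - 𝕏(-r)ᵀ_{s,t}` and `𝒵²²_{s,t} = 𝕏_{s-r,t-r}` satisfies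
Chen's relation for the enhanced path `Z_t = (X_t, X_{t-r})`. -/
theorem stmt1 {U : Type*} [NormedAddCommGroup U] [NormedSpace ℝ U] [FiniteDimensional ℝ U]
    (X : ℝ → U) (r : ℝ) (hr : 0 < r)
    (𝕏 : ℝ → ℝ → U ⊗[ℝ] U) (𝕏r : ℝ → ℝ → U ⊗[ℝ] U)
    (hChen : ∀ s u t : ℝ, 𝕏 s t = 𝕏 s u + 𝕏 u t + (X u - X s) ⊗ₜ[ℝ] (X t - X u))
    (hChenDelay : ∀ s u t : ℝ,
      𝕏r s t = 𝕏r s u + 𝕏r u t + (X (u - r) - X (s - r)) ⊗ₜ[ℝ] (X t - X u))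
    (Z : ℝ → U × U) (hZ : ∀ t, Z t = (X t, X (t - r)))
    (𝒵 : ℝ → ℝ → (U × U) ⊗[ℝ] (U × U))
    (h𝒵 : ∀ s t : ℝ, 𝒵 s t =
      TensorProduct.map (LinearMap.inl ℝ U U) (LinearMap.inl ℝ U U) (𝕏 s t)
      + TensorProduct.map (LinearMap.inr ℝ U U) (LinearMap.inl ℝ U U) (𝕏r s t)
      + TensorProduct.map (LinearMap.inl ℝ U U) (LinearMap.inr ℝ U U)
          ((X t - X s) ⊗ₜ[ℝ] (X (t - r) - X (s - r)) - (TensorProduct.comm ℝ U U) (𝕏r s t))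
      + TensorProduct.map (LinearMap.inr ℝ U U) (LinearMap.inr ℝ U U) (𝕏 (s - r) (t - r))) :
    ∀ s u t : ℝ, 𝒵 s t = 𝒵 s u + 𝒵 u t + (Z u - Z s) ⊗ₜ[ℝ] (Z t - Z u) := by
  intro s u t
  rw [h𝒵 s t, h𝒵 s u, h𝒵 u t, hZ u, hZ s, hZ t,
    hChen s u t, hChenDelay s u t, hChen (s - r) (u - r) (t - r)]
  rw [Prod.mk_sub_mk, Prod.mk_sub_mk, pair_tmul]
  have hX : X t - X s = (X u - X s) + (X t - X u) := by abel
  have hXr : X (t - r) - X (s - r) = (X (u - r) - X (s - r)) + (X (t - r) - X (u - r)) := by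
    abel
  rw [hX, hXr]
  simp only [map_add, map_sub, TensorProduct.add_tmul, TensorProduct.tmul_add,
    TensorProduct.comm_tmul]
  abel
end

section
/- For bounded linear maps T : X → Y and S : Y → Z between Banach spaces and k ≥ 1, D_k(S ∘ T) ≤ D_k(S) · D_k(T). -/
/-- `Vol(x_1,…,x_k) = ‖x_1‖ ∏_{i≥2} d(x_i, span{x_j : j < i})`; note that the distance of
`x 0` to the span of the empty family is `‖x 0‖`. -/
noncomputable def Vol {Y : Type*} [NormedAddCommGroup Y] [NormedSpace ℝ Y]
    {k : ℕ} (x : Fin k → Y) : ℝ :=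
  ∏ i : Fin k, Metric.infDist (x i) (Submodule.span ℝ (x '' {j | j < i}) : Set Y)

/-- `D_k(T) = sup { Vol(Tx_1,…,Tx_k) : ‖x_i‖ = 1 }`. -/
noncomputable def Dk {X Y : Type*} [NormedAddCommGroup X] [NormedSpace ℝ X]
    [NormedAddCommGroup Y] [NormedSpace ℝ Y] (k : ℕ) (T : X →L[ℝ] Y) : ℝ :=
  sSup {v : ℝ | ∃ x : Fin k → X, (∀ i, ‖x i‖ = 1) ∧ v = Vol (fun i => T (x i))}

section Aux

open Pointwise

variable {Y : Type*} [NormedAddCommGroup Y] [NormedSpace ℝ Y]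

lemma vol_nonneg {k : ℕ} (x : Fin k → Y) : 0 ≤ Vol x :=
  Finset.prod_nonneg fun _ _ => Metric.infDist_nonneg

lemma infDist_le_norm' (M : Submodule ℝ Y) (z : Y) :
    Metric.infDist z (M : Set Y) ≤ ‖z‖ := by
  simpa using Metric.infDist_le_dist_of_mem (M.zero_mem)

lemma vol_le_prod {k : ℕ} (x : Fin k → Y) : Vol x ≤ ∏ i, ‖x i‖ :=
  Finset.prod_le_prod (fun _ _ => Metric.infDist_nonneg)
    (fun i _ => infDist_le_norm' _ _)

lemma dkSet_bddAbove {X : Type*} [NormedAddCommGroup X] [NormedSpace ℝ X]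
    (k : ℕ) (T : X →L[ℝ] Y) :
    BddAbove {v : ℝ | ∃ x : Fin k → X, (∀ i, ‖x i‖ = 1) ∧ v = Vol (fun i => T (x i))} := by
  refine ⟨‖T‖ ^ k, ?_⟩
  rintro v ⟨x, hx, rfl⟩
  calc Vol (fun i => T (x i)) ≤ ∏ i, ‖T (x i)‖ := vol_le_prod _
    _ ≤ ∏ _i : Fin k, ‖T‖ := Finset.prod_le_prod (fun _ _ => norm_nonneg _)
        (fun i _ => by simpa [hx i] using T.le_opNorm (x i))
    _ = ‖T‖ ^ k := by simp

lemma dk_nonneg {X : Type*} [NormedAddCommGroup X] [NormedSpace ℝ X]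
    (k : ℕ) (T : X →L[ℝ] Y) : 0 ≤ Dk k T := by
  apply Real.sSup_nonneg
  rintro v ⟨x, hx, rfl⟩
  exact vol_nonneg _

lemma infDist_sub_mem (M : Submodule ℝ Y) (z : Y) {p : Y} (hp : p ∈ M) :
    Metric.infDist (z - p) (M : Set Y) = Metric.infDist z (M : Set Y) := by
  have hiso : Isometry (fun w : Y => w - p) :=
    Isometry.of_dist_eq fun a b => dist_sub_right a b p
  have himg : (fun w : Y => w - p) '' (M : Set Y) = (M : Set Y) := by
    ext w
    constructor
    · rintro ⟨m, hm, rfl⟩; exact M.sub_mem hm hp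
    · intro hw; exact ⟨w + p, M.add_mem hw hp, add_sub_cancel_right w p⟩
  calc Metric.infDist (z - p) (M : Set Y)
      = Metric.infDist ((fun w : Y => w - p) z) ((fun w : Y => w - p) '' (M : Set Y)) := by
        rw [himg]
    _ = Metric.infDist z (M : Set Y) := Metric.infDist_image hiso

lemma smul_coe_submodule (M : Submodule ℝ Y) {c : ℝ} (hc : c ≠ 0) :
    c • (M : Set Y) = (M : Set Y) := by
  ext w
  rw [Set.mem_smul_set_iff_inv_smul_mem₀ hc]
  constructor
  · intro h
    have := M.smul_mem c h
    simpa [smul_smul, mul_inv_cancel₀ hc] using this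
  · intro h; exact M.smul_mem _ h

lemma infDist_smul_submodule (M : Submodule ℝ Y) (c : ℝ) (z : Y) :
    Metric.infDist (c • z) (M : Set Y) = |c| * Metric.infDist z (M : Set Y) := by
  rcases eq_or_ne c 0 with rfl | hc
  · simp [Metric.infDist_zero_of_mem M.zero_mem]
  · calc Metric.infDist (c • z) (M : Set Y)
        = Metric.infDist (c • z) (c • (M : Set Y)) := by rw [smul_coe_submodule M hc]
      _ = ‖c‖ * Metric.infDist z (M : Set Y) := infDist_smul₀ hc _ _
      _ = |c| * Metric.infDist z (M : Set Y) := by rw [Real.norm_eq_abs]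

lemma span_aux {k : ℕ} (y p x : Fin k → Y) (c : Fin k → ℝ) (hc : ∀ j, c j ≠ 0)
    (hp : ∀ j, p j ∈ Submodule.span ℝ (y '' {i | i < j}))
    (hx : ∀ j, x j = (c j)⁻¹ • (y j - p j)) :
    ∀ m : ℕ, Submodule.span ℝ (x '' {j | (j : ℕ) < m})
      = Submodule.span ℝ (y '' {j | (j : ℕ) < m}) := by
  intro m
  induction m using Nat.strong_induction_on with
  | _ m ih =>
    apply le_antisymm
    · rw [Submodule.span_le]
      rintro _ ⟨j, hj, rfl⟩
      have hyj : y j ∈ Submodule.span ℝ (y '' {i : Fin k | (i : ℕ) < m}) :=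
        Submodule.subset_span ⟨j, hj, rfl⟩
      have hpj : p j ∈ Submodule.span ℝ (y '' {i : Fin k | (i : ℕ) < m}) := by
        refine Submodule.span_mono ?_ (hp j)
        rintro _ ⟨i, hi, rfl⟩
        exact ⟨i, show (i : ℕ) < m from lt_trans (Fin.lt_def.mp hi) hj, rfl⟩
      rw [SetLike.mem_coe, hx j]
      exact Submodule.smul_mem _ _ (Submodule.sub_mem _ hyj hpj)
    · rw [Submodule.span_le]
      rintro _ ⟨j, hj, rfl⟩
      have hxj : x j ∈ Submodule.span ℝ (x '' {i : Fin k | (i : ℕ) < m}) :=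
        Submodule.subset_span ⟨j, hj, rfl⟩
      have hpj : p j ∈ Submodule.span ℝ (x '' {i : Fin k | (i : ℕ) < m}) := by
        have h1 : p j ∈ Submodule.span ℝ (y '' {i : Fin k | (i : ℕ) < (j : ℕ)}) := hp j
        rw [← ih (j : ℕ) hj] at h1
        refine Submodule.span_mono ?_ h1
        rintro _ ⟨i, hi, rfl⟩
        exact ⟨i, show (i : ℕ) < m from lt_trans hi hj, rfl⟩
      have hyx : y j = c j • x j + p j := by
        rw [hx j, smul_inv_smul₀ (hc j)]
        abel
      rw [SetLike.mem_coe, hyx]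
      exact Submodule.add_mem _ (Submodule.smul_mem _ _ hxj) hpj

lemma span_comp {Z : Type*} [NormedAddCommGroup Z] [NormedSpace ℝ Z]
    (S : Y →L[ℝ] Z) {k : ℕ} (y : Fin k → Y) (s : Set (Fin k)) :
    Submodule.span ℝ ((fun j => S (y j)) '' s)
      = (Submodule.span ℝ (y '' s)).map (S : Y →ₗ[ℝ] Z) := by
  rw [← Submodule.span_image]
  congr 1
  rw [← Set.image_comp]
  rfl

lemma vol_comp_le {Z : Type*} [NormedAddCommGroup Z] [NormedSpace ℝ Z]
    (S : Y →L[ℝ] Z) {k : ℕ} (y : Fin k → Y) :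
    Vol (fun i => S (y i)) ≤ Dk k S * Vol y := by
  by_cases hza : ∃ i, Metric.infDist (y i) (Submodule.span ℝ (y '' {j | j < i}) : Set Y) = 0
  · obtain ⟨i, hi⟩ := hza
    have h1 : Vol y = 0 := Finset.prod_eq_zero (Finset.mem_univ i) hi
    have h2 : Vol (fun i => S (y i)) = 0 := by
      apply Finset.prod_eq_zero (Finset.mem_univ i)
      have hmem : y i ∈ closure (Submodule.span ℝ (y '' {j | j < i}) : Set Y) :=
        (Metric.mem_closure_iff_infDist_zero ⟨0, Submodule.zero_mem _⟩).2 hi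
      have hmem2 : S (y i)
          ∈ closure (Submodule.span ℝ ((fun i => S (y i)) '' {j | j < i}) : Set Z) := by
        refine map_mem_closure S.continuous hmem ?_
        intro z hz
        rw [SetLike.mem_coe] at hz ⊢
        rw [span_comp S y]
        exact Submodule.mem_map_of_mem hz
      exact Metric.infDist_zero_of_mem_closure hmem2
    rw [h1, h2, mul_zero]
  · push_neg at hza
    set d : Fin k → ℝ :=
      fun i => Metric.infDist (y i) (Submodule.span ℝ (y '' {j | j < i}) : Set Y) with hd_def
    have hd : ∀ i, 0 < d i := fun i => lt_of_le_of_ne Metric.infDist_nonneg (Ne.symm (hza i))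
    have key : ∀ ε : ℝ, ε ∈ Set.Ioi (0:ℝ) →
        Vol (fun i => S (y i)) ≤ Dk k S * ∏ i, (d i + ε) := by
      intro ε hε
      rw [Set.mem_Ioi] at hε
      have hchoice : ∀ i : Fin k,
          ∃ q ∈ (Submodule.span ℝ (y '' {j | j < i}) : Set Y), dist (y i) q < d i + ε := by
        intro i
        exact (Metric.infDist_lt_iff ⟨0, Submodule.zero_mem _⟩).1 (by linarith)
      choose p hp hdist using hchoice
      set c : Fin k → ℝ := fun i => ‖y i - p i‖ with hc_def
      have hcd : ∀ i, d i ≤ c i := by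
        intro i
        show d i ≤ ‖y i - p i‖
        rw [← dist_eq_norm]
        exact Metric.infDist_le_dist_of_mem (hp i)
      have hcpos : ∀ i, 0 < c i := fun i => lt_of_lt_of_le (hd i) (hcd i)
      set x : Fin k → Y := fun i => (c i)⁻¹ • (y i - p i) with hx_def
      have hxnorm : ∀ i, ‖x i‖ = 1 := by
        intro i
        rw [hx_def]
        simp only [norm_smul, Real.norm_eq_abs, abs_inv, abs_of_pos (hcpos i)]
        exact inv_mul_cancel₀ (hcpos i).ne'
      have hspanxy := span_aux y p x c (fun i => (hcpos i).ne')
        (fun j => hp j) (fun j => rfl)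
      have hfac : ∀ i : Fin k,
          Metric.infDist (S (y i))
            (Submodule.span ℝ ((fun j => S (y j)) '' {j | j < i}) : Set Z)
          = c i * Metric.infDist (S (x i))
            (Submodule.span ℝ ((fun j => S (x j)) '' {j | j < i}) : Set Z) := by
        intro i
        have e1 : (Submodule.span ℝ ((fun j => S (x j)) '' {j | j < i}) : Submodule ℝ Z)
            = Submodule.span ℝ ((fun j => S (y j)) '' {j | j < i}) := by
          rw [span_comp S x, span_comp S y]
          congr 1
          exact hspanxy (i : ℕ)
        have e2 : S (x i) = (c i)⁻¹ • (S (y i) - S (p i)) := by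
          rw [hx_def]; simp
        have hSp : S (p i)
            ∈ Submodule.span ℝ ((fun j => S (y j)) '' {j | j < i}) := by
          rw [span_comp S y]
          exact Submodule.mem_map_of_mem (hp i)
        rw [e1, e2, infDist_smul_submodule, infDist_sub_mem _ _ hSp,
          abs_inv, abs_of_pos (hcpos i), ← mul_assoc, mul_inv_cancel₀ (hcpos i).ne',
          one_mul]
      calc Vol (fun i => S (y i))
          = ∏ i : Fin k, (c i * Metric.infDist (S (x i))
            (Submodule.span ℝ ((fun j => S (x j)) '' {j | j < i}) : Set Z)) :=
            Finset.prod_congr rfl (fun i _ => hfac i)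
        _ = (∏ i, c i) * Vol (fun i => S (x i)) := by
            rw [Finset.prod_mul_distrib]; rfl
        _ ≤ (∏ i, c i) * Dk k S := by
            refine mul_le_mul_of_nonneg_left ?_
              (Finset.prod_nonneg fun i _ => (hcpos i).le)
            exact le_csSup (dkSet_bddAbove k S) ⟨x, hxnorm, rfl⟩
        _ ≤ (∏ i, (d i + ε)) * Dk k S := by
            refine mul_le_mul_of_nonneg_right
              (Finset.prod_le_prod (fun i _ => (hcpos i).le) (fun i _ => ?_))
              (dk_nonneg k S)
            show ‖y i - p i‖ ≤ d i + ε
            rw [← dist_eq_norm]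
            exact (hdist i).le
        _ = Dk k S * ∏ i, (d i + ε) := mul_comm _ _
    have hten : Filter.Tendsto (fun ε : ℝ => Dk k S * ∏ i, (d i + ε))
        (nhdsWithin 0 (Set.Ioi 0)) (nhds (Dk k S * ∏ i, (d i + 0))) := by
      apply Filter.Tendsto.mono_left _ nhdsWithin_le_nhds
      exact (Continuous.mul continuous_const
        (continuous_finset_prod _ fun i _ => continuous_const.add continuous_id)).tendsto 0
    have hvoly : Vol y = ∏ i, d i := rfl
    have : Vol (fun i => S (y i)) ≤ Dk k S * ∏ i, (d i + 0) := by
      refine ge_of_tendsto hten ?_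
      exact Filter.eventually_of_mem self_mem_nhdsWithin key
    simpa [hvoly] using this

end Aux

/-- `D_k(S ∘ T) ≤ D_k(S) · D_k(T)` for `k ≥ 1`. -/
theorem stmt10 {X Y Z : Type*} [NormedAddCommGroup X] [NormedSpace ℝ X] [CompleteSpace X]
    [NormedAddCommGroup Y] [NormedSpace ℝ Y] [CompleteSpace Y]
    [NormedAddCommGroup Z] [NormedSpace ℝ Z] [CompleteSpace Z]
    (T : X →L[ℝ] Y) (S : Y →L[ℝ] Z) (k : ℕ) (hk : 1 ≤ k) :
    Dk k (S.comp T) ≤ Dk k S * Dk k T := by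
  apply Real.sSup_le
  · rintro v ⟨x, hx, rfl⟩
    calc Vol (fun i => (S.comp T) (x i))
        ≤ Dk k S * Vol (fun i => T (x i)) := vol_comp_le S (fun i => T (x i))
      _ ≤ Dk k S * Dk k T :=
          mul_le_mul_of_nonneg_left
            (le_csSup (dkSet_bddAbove k T) ⟨x, hx, rfl⟩) (dk_nonneg k S)
  · exact mul_nonneg (dk_nonneg k S) (dk_nonneg k T)
end

section
/- Let T : X → Y be bounded linear between Banach spaces, let x_1,…,x_k ∈ X with ‖x_i‖ = 1, and let x ∈ span{x_1,…,x_k} \ {0}. Then there is a constant α_k depending only on k such that Vol(Tx_1, Tx_2, …, Tx_k) ≤ α_k ‖T‖^{k-1} ‖Tx‖/‖x‖. -/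
open Metric Submodule Finset

section Aux

variable {Y : Type*} [NormedAddCommGroup Y] [NormedSpace ℝ Y]

lemma infDist_span_le_norm (v : Y) (s : Set Y) :
    infDist v (Submodule.span ℝ s : Set Y) ≤ ‖v‖ := by
  have h0 : (0 : Y) ∈ (Submodule.span ℝ s : Set Y) := Submodule.zero_mem _
  simpa [dist_zero_right] using infDist_le_dist_of_mem h0

/-- The key two-term swap inequality. -/
lemma key_swap (S : Submodule ℝ Y) (a b : Y) :
    infDist b (S : Set Y) * infDist a (((ℝ ∙ b) ⊔ S : Submodule ℝ Y) : Set Y) ≤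
      2 * (infDist a (S : Set Y) * infDist b (((ℝ ∙ a) ⊔ S : Submodule ℝ Y) : Set Y)) := by
  set A := infDist a (S : Set Y) with hA
  set B := infDist b (((ℝ ∙ a) ⊔ S : Submodule ℝ Y) : Set Y) with hB
  set A' := infDist b (S : Set Y) with hA'
  set B' := infDist a (((ℝ ∙ b) ⊔ S : Submodule ℝ Y) : Set Y) with hB'
  have hA0 : 0 ≤ A := infDist_nonneg
  have hB0 : 0 ≤ B := infDist_nonneg
  have hA'0 : 0 ≤ A' := infDist_nonneg
  have hB'0 : 0 ≤ B' := infDist_nonneg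
  have hBA : B' ≤ A := by
    refine infDist_le_infDist_of_subset ?_ ⟨0, Submodule.zero_mem _⟩
    exact fun z hz => (le_sup_right : S ≤ (ℝ ∙ b) ⊔ S) hz
  refine le_of_forall_pos_le_add fun ε hε => ?_
  have hden : (0:ℝ) < 2*A + B + 1 := by linarith
  set δ := min 1 (ε / (2*A + B + 1)) with hδdef
  have hδ0 : 0 < δ := lt_min one_pos (div_pos hε hden)
  have hδ1 : δ ≤ 1 := min_le_left _ _
  have hδε : δ * (2*A + B + 1) ≤ ε := by
    calc δ * (2*A+B+1) ≤ (ε / (2*A+B+1)) * (2*A+B+1) :=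
          mul_le_mul_of_nonneg_right (min_le_right _ _) hden.le
      _ = ε := div_mul_cancel₀ _ hden.ne'
  -- approximate b by an element of span{a} ⊔ S
  have h1 : infDist b (((ℝ ∙ a) ⊔ S : Submodule ℝ Y) : Set Y) < B + δ := by
    rw [← hB]; linarith
  obtain ⟨u, huS, hub⟩ := (infDist_lt_iff ⟨0, Submodule.zero_mem _⟩).mp h1
  obtain ⟨a', ha', s, hs, rfl⟩ := Submodule.mem_sup.mp huS
  obtain ⟨t, rfl⟩ := Submodule.mem_span_singleton.mp ha'
  -- approximate a by an element of S
  have h2 : infDist a (S : Set Y) < A + δ := by rw [← hA]; linarith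
  obtain ⟨s', hs', has'⟩ := (infDist_lt_iff ⟨0, S.zero_mem⟩).mp h2
  have hAbound : A' ≤ (B + δ) + |t| * (A + δ) := by
    have hmem : t • s' + s ∈ (S : Set Y) := S.add_mem (S.smul_mem t hs') hs
    have h3 : A' ≤ dist b (t • s' + s) := infDist_le_dist_of_mem hmem
    have h4 : dist b (t • s' + s) ≤ dist b (t • a + s) + |t| * dist a s' := by
      rw [dist_eq_norm, dist_eq_norm, dist_eq_norm]
      have he : b - (t • s' + s) = (b - (t • a + s)) + t • (a - s') := by
        rw [smul_sub]; abel
      rw [he]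
      calc ‖(b - (t • a + s)) + t • (a - s')‖
          ≤ ‖b - (t • a + s)‖ + ‖t • (a - s')‖ := norm_add_le _ _
        _ = ‖b - (t • a + s)‖ + |t| * ‖a - s'‖ := by rw [norm_smul, Real.norm_eq_abs]
    have h5 : |t| * dist a s' ≤ |t| * (A + δ) :=
      mul_le_mul_of_nonneg_left has'.le (abs_nonneg t)
    have h6 := h3.trans h4
    linarith [h6, hub, h5]
  have hmain : A' * B' ≤ (B + δ) * A + (A + δ) * (B + δ) := by
    rcases eq_or_ne t 0 with rfl | ht
    · have hA'' : A' ≤ B + δ := by simpa using hAbound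
      have h6 : A' * B' ≤ (B + δ) * A :=
        mul_le_mul hA'' hBA hB'0 (by linarith)
      nlinarith
    · have ht0 : 0 < |t| := abs_pos.mpr ht
      have hB'2 : B' ≤ (B + δ) / |t| := by
        have hmem : t⁻¹ • (b - s) ∈ (((ℝ ∙ b) ⊔ S : Submodule ℝ Y) : Set Y) := by
          exact Submodule.smul_mem _ _ (Submodule.sub_mem _
            (Submodule.mem_sup_left (Submodule.mem_span_singleton_self b))
            (Submodule.mem_sup_right hs))
        have hle : B' ≤ dist a (t⁻¹ • (b - s)) := infDist_le_dist_of_mem hmem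
        have hd : dist a (t⁻¹ • (b - s)) = ‖b - (t • a + s)‖ / |t| := by
          rw [dist_eq_norm]
          have he : a - t⁻¹ • (b - s) = t⁻¹ • ((t • a + s) - b) := by
            rw [smul_sub t⁻¹ (t • a + s) b, smul_add, smul_smul, inv_mul_cancel₀ ht,
              one_smul, smul_sub]
            abel
          rw [he, norm_smul, Real.norm_eq_abs, abs_inv, norm_sub_rev,
            inv_mul_eq_div]
        have : B' ≤ ‖b - (t • a + s)‖ / |t| := by rw [← hd]; exact hle
        refine this.trans ?_
        have h7 : ‖b - (t • a + s)‖ ≤ B + δ := by rw [← dist_eq_norm]; exact hub.le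
        gcongr
      calc A' * B' ≤ ((B + δ) + |t| * (A + δ)) * B' :=
            mul_le_mul_of_nonneg_right hAbound hB'0
        _ = (B + δ) * B' + (|t| * (A + δ)) * B' := by ring
        _ ≤ (B + δ) * A + (|t| * (A + δ)) * ((B + δ) / |t|) := by
            refine add_le_add (mul_le_mul_of_nonneg_left hBA (by linarith))
              (mul_le_mul_of_nonneg_left hB'2 (by positivity))
        _ = (B + δ) * A + (A + δ) * (B + δ) := by
            field_simp
  nlinarith [hmain]


lemma swap_image_lt {k : ℕ} (p q i : Fin k) (h : p < i ↔ q < i) :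
    (Equiv.swap p q) '' {j | j < i} = {j | j < i} := by
  have hx : ∀ x : Fin k, Equiv.swap p q x < i ↔ x < i := by
    intro x
    rcases eq_or_ne x p with rfl | hp
    · rw [Equiv.swap_apply_left]; exact h.symm
    rcases eq_or_ne x q with rfl | hq
    · rw [Equiv.swap_apply_right]; exact h
    · rw [Equiv.swap_apply_of_ne_of_ne hp hq]
  ext z
  simp only [Set.mem_image, Set.mem_setOf_eq]
  constructor
  · rintro ⟨x, hxlt, rfl⟩; exact (hx x).mpr hxlt
  · intro hz
    refine ⟨Equiv.swap p q z, ?_, Equiv.swap_apply_self p q z⟩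
    have h2 := hx (Equiv.swap p q z)
    rw [Equiv.swap_apply_self] at h2
    exact h2.mp hz

lemma vol_swap {k : ℕ} (y : Fin k → Y) (p q : Fin k) (hq : (q : ℕ) = (p : ℕ) + 1) :
    Vol (y ∘ Equiv.swap p q) ≤ 2 * Vol y := by
  classical
  set σ := Equiv.swap p q with hσ
  have hpq : q ≠ p := by
    intro h; rw [h] at hq; omega
  set f : Fin k → ℝ :=
    fun i => infDist (y i) (Submodule.span ℝ (y '' {j | j < i}) : Set Y) with hf
  set g : Fin k → ℝ :=
    fun i => infDist ((y ∘ σ) i) (Submodule.span ℝ ((y ∘ σ) '' {j | j < i}) : Set Y) with hg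
  have hVol : Vol y = ∏ i, f i := rfl
  have hVol' : Vol (y ∘ σ) = ∏ i, g i := rfl
  have hmemq : q ∈ (univ : Finset (Fin k)).erase p := mem_erase.mpr ⟨hpq, mem_univ _⟩
  rw [hVol, hVol', ← Finset.mul_prod_erase univ f (mem_univ p),
    ← Finset.mul_prod_erase _ f hmemq,
    ← Finset.mul_prod_erase univ g (mem_univ p),
    ← Finset.mul_prod_erase _ g hmemq]
  have hP : ∏ i ∈ ((univ : Finset (Fin k)).erase p).erase q, g i
      = ∏ i ∈ ((univ : Finset (Fin k)).erase p).erase q, f i := by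
    refine Finset.prod_congr rfl fun i hi => ?_
    have hiq : i ≠ q := (mem_erase.mp hi).1
    have hip : i ≠ p := (mem_erase.mp (mem_erase.mp hi).2).1
    have hcond : p < i ↔ q < i := by
      have h1 : (i : ℕ) ≠ (p : ℕ) := fun h => hip (Fin.ext h)
      have h2 : (i : ℕ) ≠ (q : ℕ) := fun h => hiq (Fin.ext h)
      rw [Fin.lt_def, Fin.lt_def]
      omega
    have e1 : (y ∘ σ) i = y i := by
      simp only [Function.comp_apply, hσ, Equiv.swap_apply_of_ne_of_ne hip hiq]
    have e2 : (y ∘ σ) '' {j | j < i} = y '' {j | j < i} := by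
      rw [Set.image_comp, swap_image_lt p q i hcond]
    rw [hg]
    simp only [e1, e2, hf]
  have hgp : g p = infDist (y q) (Submodule.span ℝ (y '' {j | j < p}) : Set Y) := by
    have e1 : (y ∘ σ) p = y q := by
      simp only [Function.comp_apply, hσ, Equiv.swap_apply_left]
    have e2 : (y ∘ σ) '' {j | j < p} = y '' {j | j < p} := by
      rw [Set.image_comp, swap_image_lt p q p (by rw [Fin.lt_def, Fin.lt_def]; omega)]
    rw [hg]; simp only [e1, e2]
  have hsetq : {j : Fin k | j < q} = insert p {j : Fin k | j < p} := by
    ext j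
    simp only [Set.mem_setOf_eq, Set.mem_insert_iff, Fin.lt_def]
    constructor
    · intro hj
      rcases eq_or_ne (j : ℕ) (p : ℕ) with h | h
      · exact Or.inl (Fin.ext h)
      · right; omega
    · rintro (rfl | hj)
      · omega
      · omega
  have hgq : g q = infDist (y p)
      (Submodule.span ℝ (insert (y q) (y '' {j | j < p})) : Set Y) := by
    have e1 : (y ∘ σ) q = y p := by
      simp only [Function.comp_apply, hσ, Equiv.swap_apply_right]
    have e2 : (y ∘ σ) '' {j | j < q} = insert (y q) (y '' {j | j < p}) := by
      rw [Set.image_comp, hsetq, Set.image_insert_eq]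
      have e3 : σ '' {j : Fin k | j < p} = {j : Fin k | j < p} := by
        refine swap_image_lt p q p ?_
        rw [Fin.lt_def, Fin.lt_def]; omega
      rw [e3, Set.image_insert_eq]
      simp only [hσ, Equiv.swap_apply_left]
    rw [hg]; simp only [e1, e2]
  have hfq : f q = infDist (y q)
      (Submodule.span ℝ (insert (y p) (y '' {j | j < p})) : Set Y) := by
    rw [hf]
    simp only [hsetq, Set.image_insert_eq]
  have hkey : g p * g q ≤ 2 * (f p * f q) := by
    rw [hgp, hgq, hfq, hf]
    simp only [Submodule.span_insert]
    exact key_swap (Submodule.span ℝ (y '' {j | j < p})) (y p) (y q)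
  have hPnn : 0 ≤ ∏ i ∈ ((univ : Finset (Fin k)).erase p).erase q, f i :=
    Finset.prod_nonneg fun i _ => infDist_nonneg
  rw [hP]
  calc g p * (g q * ∏ i ∈ ((univ : Finset (Fin k)).erase p).erase q, f i)
      = (g p * g q) * ∏ i ∈ ((univ : Finset (Fin k)).erase p).erase q, f i := by ring
    _ ≤ (2 * (f p * f q)) * ∏ i ∈ ((univ : Finset (Fin k)).erase p).erase q, f i :=
        mul_le_mul_of_nonneg_right hkey hPnn
    _ = 2 * (f p * (f q * ∏ i ∈ ((univ : Finset (Fin k)).erase p).erase q, f i)) := by ring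

lemma infDist_factor_le_norm {k : ℕ} (y : Fin k → Y) (i : Fin k) :
    infDist (y i) (Submodule.span ℝ (y '' {j | j < i}) : Set Y) ≤ ‖y i‖ :=
  infDist_span_le_norm _ _

lemma vol_perm {k : ℕ} (n : ℕ) (y : Fin k → Y) (m : Fin k) (hn : k - 1 - (m : ℕ) = n) :
    Vol y ≤ 2 ^ n * ((∏ i ∈ (univ : Finset (Fin k)).erase m, ‖y i‖) *
      infDist (y m) (Submodule.span ℝ (y '' {j | j ≠ m}) : Set Y)) := by
  classical
  induction n generalizing y m with
  | zero =>
    have hm : (m : ℕ) = k - 1 := by have := m.isLt; omega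
    have hset : {j : Fin k | j < m} = {j | j ≠ m} := by
      ext j
      simp only [Set.mem_setOf_eq, Fin.lt_def, ne_eq, ← Fin.val_eq_val]
      have := j.isLt
      omega
    have hVol : Vol y = infDist (y m) (Submodule.span ℝ (y '' {j | j < m}) : Set Y) *
        ∏ i ∈ (univ : Finset (Fin k)).erase m,
          infDist (y i) (Submodule.span ℝ (y '' {j | j < i}) : Set Y) :=
      (Finset.mul_prod_erase univ _ (mem_univ m)).symm
    rw [hVol, hset, pow_zero, one_mul, mul_comm]
    refine mul_le_mul_of_nonneg_right ?_ infDist_nonneg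
    exact Finset.prod_le_prod (fun i _ => infDist_nonneg) fun i _ => infDist_factor_le_norm y i
  | succ n ih =>
    have hmk : (m : ℕ) + 1 < k := by have := m.isLt; omega
    set q : Fin k := ⟨(m : ℕ) + 1, hmk⟩ with hqdef
    have hq : (q : ℕ) = (m : ℕ) + 1 := rfl
    set σ := Equiv.swap m q with hσ
    have hinv : (y ∘ σ) ∘ σ = y := by
      funext x
      simp only [Function.comp_apply, hσ, Equiv.swap_apply_self]
    have h1 : Vol y ≤ 2 * Vol (y ∘ σ) := by
      have := vol_swap (y ∘ σ) m q hq
      rwa [hinv] at this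
    have h2 := ih (y ∘ σ) q (by rw [hq]; omega)
    have e1 : (y ∘ σ) q = y m := by
      simp only [Function.comp_apply, hσ, Equiv.swap_apply_right]
    have e2 : (y ∘ σ) '' {j | j ≠ q} = y '' {j | j ≠ m} := by
      rw [Set.image_comp]
      have : σ '' {j | j ≠ q} = {j | j ≠ m} := by
        ext z
        simp only [Set.mem_image, Set.mem_setOf_eq]
        constructor
        · rintro ⟨x, hx, rfl⟩
          intro hzm
          apply hx
          have : x = σ m := by
            have := congrArg σ hzm
            simpa [hσ, Equiv.swap_apply_self] using this
          rw [this]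
          simp [hσ, Equiv.swap_apply_left]
        · intro hz
          refine ⟨σ z, ?_, by simp [hσ, Equiv.swap_apply_self]⟩
          intro hzq
          apply hz
          have := congrArg σ hzq
          simpa [hσ, Equiv.swap_apply_self, Equiv.swap_apply_right] using this
      rw [this]
    have e3 : ∏ i ∈ (univ : Finset (Fin k)).erase q, ‖(y ∘ σ) i‖
        = ∏ i ∈ (univ : Finset (Fin k)).erase m, ‖y i‖ := by
      refine Finset.prod_bij' (fun i _ => σ i) (fun i _ => σ i) ?_ ?_ ?_ ?_ ?_
      · intro a ha
        refine mem_erase.mpr ⟨?_, mem_univ _⟩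
        intro h
        apply (mem_erase.mp ha).1
        have := congrArg σ h
        simpa [hσ, Equiv.swap_apply_self, Equiv.swap_apply_left] using this
      · intro a ha
        refine mem_erase.mpr ⟨?_, mem_univ _⟩
        intro h
        apply (mem_erase.mp ha).1
        have := congrArg σ h
        simpa [hσ, Equiv.swap_apply_self, Equiv.swap_apply_right] using this
      · intro a _; simp [hσ, Equiv.swap_apply_self]
      · intro a _; simp [hσ, Equiv.swap_apply_self]
      · intro a _; rfl
    rw [e1, e2, e3] at h2
    calc Vol y ≤ 2 * Vol (y ∘ σ) := h1
      _ ≤ 2 * (2 ^ n * ((∏ i ∈ (univ : Finset (Fin k)).erase m, ‖y i‖) *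
          infDist (y m) (Submodule.span ℝ (y '' {j | j ≠ m}) : Set Y))) := by
          refine mul_le_mul_of_nonneg_left h2 (by norm_num)
      _ = 2 ^ (n + 1) * ((∏ i ∈ (univ : Finset (Fin k)).erase m, ‖y i‖) *
          infDist (y m) (Submodule.span ℝ (y '' {j | j ≠ m}) : Set Y)) := by ring

lemma infDist_compl_le {k : ℕ} (y : Fin k → Y) (c : Fin k → ℝ) (m : Fin k) (hc : c m ≠ 0) :
    infDist (y m) (Submodule.span ℝ (y '' {j | j ≠ m}) : Set Y)
      ≤ ‖∑ i, c i • y i‖ / |c m| := by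
  classical
  set w := ∑ i, c i • y i with hw
  set z := y m - (c m)⁻¹ • w with hz
  have hzmem : z ∈ Submodule.span ℝ (y '' {j | j ≠ m}) := by
    have hsum : ∑ i ∈ (univ : Finset (Fin k)).erase m, c i • y i
        ∈ Submodule.span ℝ (y '' {j | j ≠ m}) := by
      refine Submodule.sum_mem _ fun i hi => ?_
      exact Submodule.smul_mem _ _ (Submodule.subset_span ⟨i, (mem_erase.mp hi).1, rfl⟩)
    have hwe : w = c m • y m + ∑ i ∈ (univ : Finset (Fin k)).erase m, c i • y i :=
      (Finset.add_sum_erase univ (fun i => c i • y i) (mem_univ m)).symm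
    have hze : z = (-(c m)⁻¹) • ∑ i ∈ (univ : Finset (Fin k)).erase m, c i • y i := by
      rw [hz, hwe, smul_add, smul_smul, inv_mul_cancel₀ hc, one_smul, neg_smul]
      abel
    rw [hze]
    exact Submodule.smul_mem _ _ hsum
  calc infDist (y m) (Submodule.span ℝ (y '' {j | j ≠ m}) : Set Y)
      ≤ dist (y m) z := infDist_le_dist_of_mem hzmem
    _ = ‖(c m)⁻¹ • w‖ := by rw [dist_eq_norm, hz]; congr 1; abel
    _ = ‖w‖ / |c m| := by
        rw [norm_smul, Real.norm_eq_abs, abs_inv, inv_mul_eq_div]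

end Aux


/-- there is a constant `α_k` depending only on `k` such that for any bounded
linear map `T : X → Y` between Banach spaces, unit vectors `x_1,…,x_k` and any nonzero
`x ∈ span{x_1,…,x_k}`, `Vol(Tx_1,…,Tx_k) ≤ α_k ‖T‖^{k-1} ‖Tx‖/‖x‖`. -/
theorem stmt11 (k : ℕ) (hk : 1 ≤ k) :
    ∃ α : ℝ, 0 < α ∧
      ∀ (X Y : Type) [NormedAddCommGroup X] [NormedSpace ℝ X] [CompleteSpace X]
        [NormedAddCommGroup Y] [NormedSpace ℝ Y] [CompleteSpace Y]
        (T : X →L[ℝ] Y) (x : Fin k → X),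
        (∀ i, ‖x i‖ = 1) →
        ∀ v ∈ Submodule.span ℝ (Set.range x), v ≠ 0 →
          Vol (fun i => T (x i)) ≤ α * ‖T‖ ^ (k - 1) * ‖T v‖ / ‖v‖ := by
  classical
  have hk0 : (0:ℝ) < (k:ℝ) := by exact_mod_cast hk
  refine ⟨2 ^ k * k, by positivity, ?_⟩
  intro X Y _ _ _ _ _ _ T x hx v hv hv0
  haveI : Nonempty (Fin k) := ⟨⟨0, hk⟩⟩
  obtain ⟨c, hc⟩ := (mem_span_range_iff_exists_fun ℝ).mp hv
  obtain ⟨m, -, hm⟩ := Finset.exists_max_image Finset.univ (fun i => |c i|)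
    Finset.univ_nonempty
  set y : Fin k → Y := fun i => T (x i) with hy
  have hvle : ‖v‖ ≤ (k:ℝ) * |c m| := by
    rw [← hc]
    refine (norm_sum_le _ _).trans ?_
    have hle : ∀ i ∈ Finset.univ, ‖c i • x i‖ ≤ |c m| := by
      intro i _
      rw [norm_smul, hx i, mul_one, Real.norm_eq_abs]
      exact hm i (Finset.mem_univ i)
    calc ∑ i, ‖c i • x i‖ ≤ Finset.univ.card • |c m| :=
          Finset.sum_le_card_nsmul _ _ _ hle
      _ = (k:ℝ) * |c m| := by simp [Finset.card_univ, nsmul_eq_mul]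
  have hnv : 0 < ‖v‖ := norm_pos_iff.mpr hv0
  have hcm : 0 < |c m| := by
    rcases lt_or_eq_of_le (abs_nonneg (c m)) with h | h
    · exact h
    · exfalso
      apply hv0
      rw [← hc]
      refine Finset.sum_eq_zero fun i _ => ?_
      have : |c i| ≤ 0 := by rw [h]; exact hm i (Finset.mem_univ i)
      have : c i = 0 := abs_eq_zero.mp (le_antisymm this (abs_nonneg _))
      rw [this, zero_smul]
  have hcm0 : c m ≠ 0 := abs_pos.mp hcm
  have hmain := vol_perm (k - 1 - (m : ℕ)) y m rfl
  have hTv : T v = ∑ i, c i • y i := by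
    rw [← hc, map_sum]
    simp [hy]
  have he : Metric.infDist (y m) (Submodule.span ℝ (y '' {j | j ≠ m}) : Set Y)
      ≤ ‖T v‖ / |c m| := by
    rw [hTv]
    exact infDist_compl_le y c m hcm0
  have hprod : ∏ i ∈ Finset.univ.erase m, ‖y i‖ ≤ ‖T‖ ^ (k - 1) := by
    calc ∏ i ∈ Finset.univ.erase m, ‖y i‖ ≤ ∏ _i ∈ Finset.univ.erase m, ‖T‖ := by
          refine Finset.prod_le_prod (fun i _ => norm_nonneg _) fun i _ => ?_
          calc ‖y i‖ = ‖T (x i)‖ := rfl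
            _ ≤ ‖T‖ * ‖x i‖ := T.le_opNorm _
            _ = ‖T‖ := by rw [hx i, mul_one]
      _ = ‖T‖ ^ (k - 1) := by
          rw [Finset.prod_const, Finset.card_erase_of_mem (Finset.mem_univ m),
            Finset.card_univ, Fintype.card_fin]
  have hediv : ‖T v‖ / |c m| ≤ (k:ℝ) * ‖T v‖ / ‖v‖ := by
    rw [div_le_div_iff₀ hcm hnv]
    nlinarith [norm_nonneg (T v), hvle]
  have h2n : (2:ℝ) ^ (k - 1 - (m : ℕ)) ≤ 2 ^ k := by
    apply pow_le_pow_right₀ one_le_two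
    omega
  have henn : 0 ≤ Metric.infDist (y m) (Submodule.span ℝ (y '' {j | j ≠ m}) : Set Y) :=
    Metric.infDist_nonneg
  have hpnn : 0 ≤ ∏ i ∈ Finset.univ.erase m, ‖y i‖ :=
    Finset.prod_nonneg fun i _ => norm_nonneg _
  calc Vol y ≤ 2 ^ (k - 1 - (m : ℕ)) * ((∏ i ∈ Finset.univ.erase m, ‖y i‖) *
        Metric.infDist (y m) (Submodule.span ℝ (y '' {j | j ≠ m}) : Set Y)) := hmain
    _ ≤ 2 ^ k * (‖T‖ ^ (k - 1) * (‖T v‖ / |c m|)) := by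
        refine mul_le_mul h2n ?_ (by positivity) (by positivity)
        exact mul_le_mul hprod he henn (by positivity)
    _ ≤ 2 ^ k * (‖T‖ ^ (k - 1) * ((k:ℝ) * ‖T v‖ / ‖v‖)) := by
        refine mul_le_mul_of_nonneg_left ?_ (by positivity)
        exact mul_le_mul_of_nonneg_left hediv (by positivity)
    _ = 2 ^ k * (k:ℝ) * ‖T‖ ^ (k - 1) * ‖T v‖ / ‖v‖ := by ring
end

section
/- Let B be a standard d-dimensional Brownian motion, r > 0, ρ : ℝ → [0,2] a smooth probability density supported in [0,1], ε ∈ (0,1], and B^ε_t := ∫_ℝ B_{t - εz} ρ(z) dz − ∫_ℝ B_{-εz} ρ(z) dz. Then there is a constant M independent of ε, s, t such that E|B^ε_{s,t}|² ≤ M (t − s) for all s ≤ t, and for fixed s ≤ t, E|B^ε_{s,t} − B_{s,t}|² → 0 as ε → 0. -/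
open MeasureTheory Filter Set


lemma key_lemma {Ω : Type*} [MeasurableSpace Ω] (P : Measure Ω) [IsProbabilityMeasure P]
    {d : ℕ} (X : ℝ → Ω → EuclideanSpace ℝ (Fin d))
    (hX : Measurable (Function.uncurry X))
    (ρ : ℝ → ℝ) (hρm : Measurable ρ) (hρ0 : ∀ z, 0 ≤ ρ z) (hρ2 : ∀ z, ρ z ≤ 2)
    (hρint1 : ∫ z in Set.Icc (0:ℝ) 1, ρ z = 1)
    (C : ℝ) (hC : 0 ≤ C)
    (hint : ∀ z ∈ Set.Icc (0:ℝ) 1, Integrable (fun ω => ‖X z ω‖^2) P)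
    (hbd : ∀ z ∈ Set.Icc (0:ℝ) 1, ∫ ω, ‖X z ω‖^2 ∂P ≤ C) :
    ∫ ω, ‖∫ z in Set.Icc (0:ℝ) 1, ρ z • X z ω‖^2 ∂P ≤ C := by
  set ν : Measure ℝ := volume.restrict (Set.Icc (0:ℝ) 1) with hν
  have hνuniv : ν Set.univ = 1 := by
    rw [hν, Measure.restrict_apply_univ, Real.volume_Icc]; norm_num
  haveI : IsProbabilityMeasure ν := ⟨hνuniv⟩
  have hXω : ∀ ω, Measurable (fun z => X z ω) := fun ω => hX.of_uncurry_right
  -- integrability of ρ wrt ν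
  have hρi : Integrable ρ ν := by
    refine (integrable_const (2:ℝ)).mono' hρm.aestronglyMeasurable ?_
    exact Filter.Eventually.of_forall fun z => by
      rw [Real.norm_of_nonneg (hρ0 z)]; exact hρ2 z
  have hρlint : ∫⁻ z, ENNReal.ofReal (ρ z) ∂ν = 1 := by
    rw [← ofReal_integral_eq_lintegral_ofReal hρi (Filter.Eventually.of_forall hρ0)]
    rw [hρint1, ENNReal.ofReal_one]
  -- joint measurability of the weighted-square integrand
  have hmeasF : Measurable (fun p : Ω × ℝ => ENNReal.ofReal (ρ p.2 * ‖X p.2 p.1‖ ^ 2)) := by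
    apply Measurable.ennreal_ofReal
    exact (hρm.comp measurable_snd).mul
      (((hX.comp measurable_swap).norm).pow_const 2)
  -- Fubini bound
  have hfub : ∫⁻ ω, (∫⁻ z, ENNReal.ofReal (ρ z * ‖X z ω‖ ^ 2) ∂ν) ∂P ≤ ENNReal.ofReal C := by
    have hswap := lintegral_lintegral_swap (μ := P) (ν := ν)
      (f := fun ω z => ENNReal.ofReal (ρ z * ‖X z ω‖ ^ 2)) hmeasF.aemeasurable
    rw [hswap]
    have hz : ∀ᵐ z ∂ν, (∫⁻ ω, ENNReal.ofReal (ρ z * ‖X z ω‖ ^ 2) ∂P)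
        ≤ ENNReal.ofReal (ρ z) * ENNReal.ofReal C := by
      filter_upwards [ae_restrict_mem measurableSet_Icc] with z hz
      have h1 : ∀ ω, ENNReal.ofReal (ρ z * ‖X z ω‖ ^ 2)
          = ENNReal.ofReal (ρ z) * ENNReal.ofReal (‖X z ω‖ ^ 2) := fun ω =>
        ENNReal.ofReal_mul (hρ0 z)
      simp_rw [h1]
      rw [lintegral_const_mul' _ _ ENNReal.ofReal_ne_top]
      have h2 : ∫⁻ ω, ENNReal.ofReal (‖X z ω‖ ^ 2) ∂P ≤ ENNReal.ofReal C := by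
        rw [← ofReal_integral_eq_lintegral_ofReal (hint z hz)
          (Filter.Eventually.of_forall fun ω => sq_nonneg _)]
        exact ENNReal.ofReal_le_ofReal (hbd z hz)
      gcongr
    calc ∫⁻ z, (∫⁻ ω, ENNReal.ofReal (ρ z * ‖X z ω‖ ^ 2) ∂P) ∂ν
        ≤ ∫⁻ z, ENNReal.ofReal (ρ z) * ENNReal.ofReal C ∂ν := lintegral_mono_ae hz
      _ = (∫⁻ z, ENNReal.ofReal (ρ z) ∂ν) * ENNReal.ofReal C := by
          rw [lintegral_mul_const' _ _ ENNReal.ofReal_ne_top]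
      _ = ENNReal.ofReal C := by rw [hρlint, one_mul]
  -- a.e. integrability of the weighted square in z
  have hae : ∀ᵐ ω ∂P, Integrable (fun z => ρ z * ‖X z ω‖ ^ 2) ν := by
    have hfin : ∀ᵐ ω ∂P, (∫⁻ z, ENNReal.ofReal (ρ z * ‖X z ω‖ ^ 2) ∂ν) < ⊤ := by
      refine ae_lt_top (hmeasF.lintegral_prod_right') (lt_of_le_of_lt hfub ?_).ne
      exact ENNReal.ofReal_lt_top
    filter_upwards [hfin] with ω hω
    refine ⟨((hρm.mul ((hXω ω).norm.pow_const 2)).aestronglyMeasurable), ?_⟩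
    rw [hasFiniteIntegral_iff_ofReal (Filter.Eventually.of_forall fun z =>
      mul_nonneg (hρ0 z) (sq_nonneg _))]
    exact hω
  -- pointwise Cauchy-Schwarz
  have hptwise : ∀ᵐ ω ∂P,
      ENNReal.ofReal (‖∫ z, ρ z • X z ω ∂ν‖ ^ 2)
        ≤ ∫⁻ z, ENNReal.ofReal (ρ z * ‖X z ω‖ ^ 2) ∂ν := by
    filter_upwards [hae] with ω hω
    set ρ' : ℝ → NNReal := fun z => (ρ z).toNNReal with hρ'
    have hρ'm : Measurable ρ' := measurable_real_toNNReal.comp hρm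
    have hρ'c : ∀ z, ((ρ' z : ℝ)) = ρ z := fun z => Real.coe_toNNReal _ (hρ0 z)
    set μρ : Measure ℝ := ν.withDensity (fun z => (ρ' z : ENNReal)) with hμρ
    haveI : IsProbabilityMeasure μρ := by
      constructor
      rw [hμρ, withDensity_apply _ MeasurableSet.univ, Measure.restrict_univ]
      have : ∫⁻ z, (ρ' z : ENNReal) ∂ν = ∫⁻ z, ENNReal.ofReal (ρ z) ∂ν := by
        apply lintegral_congr; intro z
        rw [← hρ'c z, ENNReal.ofReal_coe_nnreal]
      rw [this, hρlint]
    set g : ℝ → ℝ := fun z => ‖X z ω‖ with hg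
    have hgm : Measurable g := (hXω ω).norm
    have hg2 : Integrable (fun z => g z ^ 2) μρ := by
      rw [hμρ, integrable_withDensity_iff_integrable_smul hρ'm]
      refine hω.congr ?_
      refine Filter.Eventually.of_forall fun z => ?_
      show ρ z * ‖X z ω‖ ^ 2 = ρ' z • g z ^ 2
      rw [NNReal.smul_def, smul_eq_mul, hρ'c z]
    have hmem : MemLp g 2 μρ :=
      (memLp_two_iff_integrable_sq hgm.aestronglyMeasurable).2 hg2
    have hCS : (∫ z, g z ∂μρ) ^ 2 ≤ ∫ z, g z ^ 2 ∂μρ := by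
      have hv := ProbabilityTheory.variance_nonneg g μρ
      rw [ProbabilityTheory.variance_eq_sub hmem] at hv
      have : ∫ z, (g ^ 2) z ∂μρ = ∫ z, g z ^ 2 ∂μρ := by
        apply integral_congr_ae; exact Filter.Eventually.of_forall fun z => rfl
      rw [this] at hv
      linarith
    have hw1 : ∫ z, g z ∂μρ = ∫ z, ρ z * g z ∂ν := by
      rw [hμρ, integral_withDensity_eq_integral_smul hρ'm]
      apply integral_congr_ae
      refine Filter.Eventually.of_forall fun z => ?_
      show ρ' z • g z = ρ z * g z
      rw [NNReal.smul_def, smul_eq_mul, hρ'c z]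
    have hw2 : ∫ z, g z ^ 2 ∂μρ = ∫ z, ρ z * g z ^ 2 ∂ν := by
      rw [hμρ, integral_withDensity_eq_integral_smul hρ'm]
      apply integral_congr_ae
      refine Filter.Eventually.of_forall fun z => ?_
      show ρ' z • g z ^ 2 = ρ z * g z ^ 2
      rw [NNReal.smul_def, smul_eq_mul, hρ'c z]
    have hnorm : ‖∫ z, ρ z • X z ω ∂ν‖ ≤ ∫ z, ρ z * g z ∂ν := by
      refine le_trans (norm_integral_le_integral_norm _) (le_of_eq ?_)
      apply integral_congr_ae
      refine Filter.Eventually.of_forall fun z => ?_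
      show ‖ρ z • X z ω‖ = ρ z * g z
      rw [norm_smul, Real.norm_of_nonneg (hρ0 z)]
    have hsq : ‖∫ z, ρ z • X z ω ∂ν‖ ^ 2 ≤ ∫ z, ρ z * ‖X z ω‖ ^ 2 ∂ν := by
      calc ‖∫ z, ρ z • X z ω ∂ν‖ ^ 2 ≤ (∫ z, ρ z * g z ∂ν) ^ 2 :=
            pow_le_pow_left₀ (norm_nonneg _) hnorm 2
        _ = (∫ z, g z ∂μρ) ^ 2 := by rw [hw1]
        _ ≤ ∫ z, g z ^ 2 ∂μρ := hCS
        _ = ∫ z, ρ z * ‖X z ω‖ ^ 2 ∂ν := hw2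
    calc ENNReal.ofReal (‖∫ z, ρ z • X z ω ∂ν‖ ^ 2)
        ≤ ENNReal.ofReal (∫ z, ρ z * ‖X z ω‖ ^ 2 ∂ν) := ENNReal.ofReal_le_ofReal hsq
      _ = ∫⁻ z, ENNReal.ofReal (ρ z * ‖X z ω‖ ^ 2) ∂ν :=
          ofReal_integral_eq_lintegral_ofReal hω
            (Filter.Eventually.of_forall fun z => mul_nonneg (hρ0 z) (sq_nonneg _))
  -- conclude
  have hsm : AEStronglyMeasurable (fun ω => ‖∫ z, ρ z • X z ω ∂ν‖ ^ 2) P := by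
    have hm : Measurable (fun p : Ω × ℝ => ρ p.2 • X p.2 p.1) :=
      (hρm.comp measurable_snd).smul (hX.comp measurable_swap)
    have hsm1 : StronglyMeasurable (fun ω => ∫ z, ρ z • X z ω ∂ν) :=
      (hm.stronglyMeasurable).integral_prod_right'
    exact ((hsm1.measurable.norm).pow_const 2).aestronglyMeasurable
  rw [integral_eq_lintegral_of_nonneg_ae
    (Filter.Eventually.of_forall fun ω => sq_nonneg _) hsm]
  have hle : ∫⁻ ω, ENNReal.ofReal (‖∫ z, ρ z • X z ω ∂ν‖ ^ 2) ∂P ≤ ENNReal.ofReal C :=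
    le_trans (lintegral_mono_ae hptwise) hfub
  calc (∫⁻ ω, ENNReal.ofReal (‖∫ z, ρ z • X z ω ∂ν‖ ^ 2) ∂P).toReal
      ≤ (ENNReal.ofReal C).toReal := ENNReal.toReal_mono ENNReal.ofReal_ne_top hle
    _ = C := ENNReal.toReal_ofReal hC

lemma ae_fin_lemma {Ω : Type*} [MeasurableSpace Ω] (P : Measure Ω) [IsProbabilityMeasure P]
    (F : Ω × ℝ → ENNReal) (hF : Measurable F) (K : ENNReal) (hK : K ≠ ⊤)
    (hbound : ∀ z ∈ Set.Icc (0:ℝ) 1, ∫⁻ ω, F (ω, z) ∂P ≤ K) :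
    ∀ᵐ ω ∂P, (∫⁻ z, F (ω, z) ∂(volume.restrict (Set.Icc (0:ℝ) 1))) < ⊤ := by
  set ν : Measure ℝ := volume.restrict (Set.Icc (0:ℝ) 1) with hν
  haveI : IsProbabilityMeasure ν :=
    ⟨by rw [hν, Measure.restrict_apply_univ, Real.volume_Icc]; norm_num⟩
  refine ae_lt_top hF.lintegral_prod_right' ?_
  have hswap := lintegral_lintegral_swap (μ := P) (ν := ν)
    (f := fun ω z => F (ω, z)) hF.aemeasurable
  rw [hswap]
  have hle : ∫⁻ z, (∫⁻ ω, F (ω, z) ∂P) ∂ν ≤ ∫⁻ _, K ∂ν := by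
    refine lintegral_mono_ae ?_
    filter_upwards [ae_restrict_mem measurableSet_Icc] with z hz
    exact hbound z hz
  rw [lintegral_const, measure_univ, mul_one] at hle
  exact (lt_of_le_of_lt hle hK.lt_top).ne

lemma moll_increment {Ω : Type*} [MeasurableSpace Ω]
    {d : ℕ} (B : ℝ → Ω → EuclideanSpace ℝ (Fin d))
    (ρ : ℝ → ℝ) (hρsupp : ∀ z, z ∉ Set.Icc (0:ℝ) 1 → ρ z = 0)
    (hρi : Integrable ρ (volume.restrict (Set.Icc (0:ℝ) 1)))
    (hρint1 : ∫ z in Set.Icc (0:ℝ) 1, ρ z = 1)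
    (ε s t : ℝ) (ω : Ω)
    (ht : Integrable (fun z => ρ z • (B (t - ε*z) ω - B 0 ω))
      (volume.restrict (Set.Icc (0:ℝ) 1)))
    (hs : Integrable (fun z => ρ z • (B (s - ε*z) ω - B 0 ω))
      (volume.restrict (Set.Icc (0:ℝ) 1))) :
    Integrable (fun z => ρ z • (B (t - ε*z) ω - B (s - ε*z) ω))
      (volume.restrict (Set.Icc (0:ℝ) 1)) ∧
    (∫ z : ℝ, ρ z • B (t - ε*z) ω) - (∫ z : ℝ, ρ z • B (s - ε*z) ω)
      = ∫ z in Set.Icc (0:ℝ) 1, ρ z • (B (t - ε*z) ω - B (s - ε*z) ω) := by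
  set ν : Measure ℝ := volume.restrict (Set.Icc (0:ℝ) 1) with hν
  have hsub : ∀ z : ℝ,
      ρ z • (B (t - ε*z) ω - B 0 ω) - ρ z • (B (s - ε*z) ω - B 0 ω)
        = ρ z • (B (t - ε*z) ω - B (s - ε*z) ω) := by
    intro z; simp only [smul_sub]; abel
  have hint : Integrable (fun z => ρ z • (B (t - ε*z) ω - B (s - ε*z) ω)) ν :=
    (ht.sub hs).congr (Filter.Eventually.of_forall fun z => hsub z)
  refine ⟨hint, ?_⟩
  have key : ∀ u : ℝ, Integrable (fun z => ρ z • (B (u - ε*z) ω - B 0 ω)) ν →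
      (∫ z : ℝ, ρ z • B (u - ε*z) ω)
        = (∫ z in Set.Icc (0:ℝ) 1, ρ z • (B (u - ε*z) ω - B 0 ω)) + B 0 ω := by
    intro u hu
    have h1 : (∫ z : ℝ, ρ z • B (u - ε*z) ω) = ∫ z in Set.Icc (0:ℝ) 1, ρ z • B (u - ε*z) ω := by
      refine (setIntegral_eq_integral_of_forall_compl_eq_zero fun z hz => ?_).symm
      rw [hρsupp z hz, zero_smul]
    have h2 : (∫ z in Set.Icc (0:ℝ) 1, ρ z • B (u - ε*z) ω)
        = ∫ z in Set.Icc (0:ℝ) 1,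
            (ρ z • (B (u - ε*z) ω - B 0 ω) + ρ z • B 0 ω) := by
      refine integral_congr_ae (Filter.Eventually.of_forall fun z => ?_)
      show ρ z • B (u - ε*z) ω = ρ z • (B (u - ε*z) ω - B 0 ω) + ρ z • B 0 ω
      rw [smul_sub, sub_add_cancel]
    have h3 : (∫ z in Set.Icc (0:ℝ) 1,
          (ρ z • (B (u - ε*z) ω - B 0 ω) + ρ z • B 0 ω))
        = (∫ z in Set.Icc (0:ℝ) 1, ρ z • (B (u - ε*z) ω - B 0 ω))
          + ∫ z in Set.Icc (0:ℝ) 1, ρ z • B 0 ω :=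
      integral_add hu (hρi.smul_const _)
    have h4 : (∫ z in Set.Icc (0:ℝ) 1, ρ z • B 0 ω) = B 0 ω := by
      rw [integral_smul_const, hρint1, one_smul]
    rw [h1, h2, h3, h4]
  rw [key t ht, key s hs]
  have h5 : (∫ z in Set.Icc (0:ℝ) 1, ρ z • (B (t - ε*z) ω - B 0 ω))
      - (∫ z in Set.Icc (0:ℝ) 1, ρ z • (B (s - ε*z) ω - B 0 ω))
      = ∫ z in Set.Icc (0:ℝ) 1, ρ z • (B (t - ε*z) ω - B (s - ε*z) ω) := by
    rw [← integral_sub ht hs]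
    exact integral_congr_ae (Filter.Eventually.of_forall fun z => hsub z)
  rw [← h5]; abel


/-- for a (two-sided) standard `d`-dimensional Brownian motion `B` (characterized
here by joint measurability and the increment second moment `E‖B_{s,t}‖² = d·|t-s|`), the
mollifications `B^ε_t = ∫ B_{t-εz} ρ(z) dz − ∫ B_{-εz} ρ(z) dz` satisfy
`E‖B^ε_{s,t}‖² ≤ M (t-s)` with `M` independent of `ε ∈ (0,1]`, and
`E‖B^ε_{s,t} − B_{s,t}‖² → 0` as `ε → 0⁺`. -/
theorem stmt14 {Ω : Type*} [MeasurableSpace Ω] (P : Measure Ω) [IsProbabilityMeasure P]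
    (d : ℕ) (hd : 1 ≤ d) (r : ℝ) (hr : 0 < r)
    (B : ℝ → Ω → EuclideanSpace ℝ (Fin d))
    (hBmeas : Measurable (Function.uncurry B))
    (hB2 : ∀ s t : ℝ, ∫ ω, ‖B t ω - B s ω‖ ^ 2 ∂P = d * |t - s|)
    (ρ : ℝ → ℝ) (hρsmooth : ContDiff ℝ (⊤ : ℕ∞) ρ)
    (hρrange : ∀ z, ρ z ∈ Set.Icc (0:ℝ) 2)
    (hρsupp : Function.support ρ ⊆ Set.Icc (0:ℝ) 1)
    (hρint : ∫ z, ρ z = 1)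
    (Bε : ℝ → ℝ → Ω → EuclideanSpace ℝ (Fin d))
    (hBε : ∀ ε t ω, Bε ε t ω =
      (∫ z : ℝ, ρ z • B (t - ε * z) ω) - (∫ z : ℝ, ρ z • B (-(ε * z)) ω)) :
    (∃ M : ℝ, ∀ ε ∈ Set.Ioc (0:ℝ) 1, ∀ s t : ℝ, s ≤ t →
        ∫ ω, ‖Bε ε t ω - Bε ε s ω‖ ^ 2 ∂P ≤ M * (t - s))
    ∧ ∀ s t : ℝ, s ≤ t →
        Tendsto (fun ε => ∫ ω, ‖(Bε ε t ω - Bε ε s ω) - (B t ω - B s ω)‖ ^ 2 ∂P)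
          (nhdsWithin 0 (Set.Ioi 0)) (nhds 0) := by
  classical
  set ν : Measure ℝ := volume.restrict (Set.Icc (0:ℝ) 1) with hν
  have hρ0 : ∀ z, 0 ≤ ρ z := fun z => (hρrange z).1
  have hρ2 : ∀ z, ρ z ≤ 2 := fun z => (hρrange z).2
  have hρm : Measurable ρ := hρsmooth.continuous.measurable
  have hρz : ∀ z, z ∉ Set.Icc (0:ℝ) 1 → ρ z = 0 := by
    intro z hz
    by_contra h
    exact hz (hρsupp h)
  have hρint1 : ∫ z in Set.Icc (0:ℝ) 1, ρ z = 1 := by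
    rw [setIntegral_eq_integral_of_forall_compl_eq_zero hρz]; exact hρint
  have hρi : Integrable ρ ν := (integrable_const (2:ℝ)).mono' hρm.aestronglyMeasurable
    (Filter.Eventually.of_forall fun z => by
      rw [Real.norm_of_nonneg (hρ0 z)]; exact hρ2 z)
  have hBsec : ∀ v : ℝ, Measurable (fun ω => B v ω) := fun v => hBmeas.of_uncurry_left
  -- L² integrability of increments
  have hL2 : ∀ u v : ℝ, Integrable (fun ω => ‖B u ω - B v ω‖ ^ 2) P := by
    intro u v
    rcases eq_or_ne u v with rfl | h
    · exact (integrable_const (0:ℝ)).congr (Filter.Eventually.of_forall fun ω => by simp)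
    · by_contra hcon
      have h0 := integral_undef hcon
      rw [hB2 v u] at h0
      have h1 : |u - v| ≠ 0 := abs_ne_zero.2 (sub_ne_zero.2 h)
      have hd0 : (d:ℝ) ≠ 0 := Nat.cast_ne_zero.2 (by omega)
      exact (mul_ne_zero hd0 h1) h0
  -- a.e. integrability of the centered mollified integrand
  have haegood : ∀ (u ε : ℝ), ∀ᵐ ω ∂P,
      Integrable (fun z => ρ z • (B (u - ε*z) ω - B 0 ω)) ν := by
    intro u ε
    set F : Ω × ℝ → ENNReal :=
      fun p => ENNReal.ofReal (ρ p.2 * ‖B (u - ε*p.2) p.1 - B 0 p.1‖) with hF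
    have hFm : Measurable F := by
      apply Measurable.ennreal_ofReal
      refine (hρm.comp measurable_snd).mul (Measurable.norm ?_)
      have h1 : Measurable (fun p : Ω × ℝ => B (u - ε*p.2) p.1) :=
        hBmeas.comp ((measurable_const.sub (measurable_snd.const_mul ε)).prodMk
          measurable_fst)
      exact h1.sub ((hBsec 0).comp measurable_fst)
    set K : ENNReal := ENNReal.ofReal 2 * (1 + ENNReal.ofReal (d * (|u| + |ε|))) with hK
    have hKne : K ≠ ⊤ :=
      ENNReal.mul_ne_top ENNReal.ofReal_ne_top
        (ENNReal.add_ne_top.2 ⟨ENNReal.one_ne_top, ENNReal.ofReal_ne_top⟩)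
    have hbound : ∀ z ∈ Set.Icc (0:ℝ) 1, ∫⁻ ω, F (ω, z) ∂P ≤ K := by
      intro z hz
      have hz1 : |u - ε * z| ≤ |u| + |ε| := by
        have h1 : |u - ε * z| ≤ |u| + |ε * z| := abs_sub u (ε * z)
        have h2 : |ε * z| ≤ |ε| := by
          rw [abs_mul]
          calc |ε| * |z| ≤ |ε| * 1 := by
                refine mul_le_mul_of_nonneg_left ?_ (abs_nonneg ε)
                rw [abs_of_nonneg hz.1]; exact hz.2
            _ = |ε| := mul_one _
        linarith
      have e1 : ∀ ω : Ω, F (ω, z)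
          = ENNReal.ofReal (ρ z) * ENNReal.ofReal ‖B (u - ε*z) ω - B 0 ω‖ := fun ω => by
        rw [hF]; exact ENNReal.ofReal_mul (hρ0 z)
      simp_rw [e1]
      rw [lintegral_const_mul' _ _ ENNReal.ofReal_ne_top]
      have h2 : ∫⁻ ω, ENNReal.ofReal ‖B (u - ε*z) ω - B 0 ω‖ ∂P
          ≤ 1 + ENNReal.ofReal (d * (|u| + |ε|)) := by
        have step : ∀ ω, ENNReal.ofReal ‖B (u - ε*z) ω - B 0 ω‖
            ≤ 1 + ENNReal.ofReal (‖B (u - ε*z) ω - B 0 ω‖ ^ 2) := by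
          intro ω
          rw [← ENNReal.ofReal_one, ← ENNReal.ofReal_add zero_le_one (sq_nonneg _)]
          exact ENNReal.ofReal_le_ofReal
            (by nlinarith [norm_nonneg (B (u - ε*z) ω - B 0 ω)])
        calc ∫⁻ ω, ENNReal.ofReal ‖B (u - ε*z) ω - B 0 ω‖ ∂P
            ≤ ∫⁻ ω, (1 + ENNReal.ofReal (‖B (u - ε*z) ω - B 0 ω‖ ^ 2)) ∂P :=
              lintegral_mono step
          _ = 1 + ∫⁻ ω, ENNReal.ofReal (‖B (u - ε*z) ω - B 0 ω‖ ^ 2) ∂P := by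
              rw [lintegral_add_left measurable_const, lintegral_const, measure_univ,
                mul_one]
          _ = 1 + ENNReal.ofReal (∫ ω, ‖B (u - ε*z) ω - B 0 ω‖ ^ 2 ∂P) := by
              rw [ofReal_integral_eq_lintegral_ofReal (hL2 _ _)
                (Filter.Eventually.of_forall fun ω => sq_nonneg _)]
          _ ≤ 1 + ENNReal.ofReal (d * (|u| + |ε|)) := by
              refine add_le_add le_rfl (ENNReal.ofReal_le_ofReal ?_)
              rw [hB2 0 (u - ε*z), sub_zero]
              exact mul_le_mul_of_nonneg_left hz1 (Nat.cast_nonneg d)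
      exact mul_le_mul' (ENNReal.ofReal_le_ofReal (hρ2 z)) h2
    have hfin := ae_fin_lemma P F hFm K hKne hbound
    filter_upwards [hfin] with ω hω
    constructor
    · apply Measurable.aestronglyMeasurable
      exact hρm.smul
        (((hBmeas.of_uncurry_right).comp
          (measurable_const.sub (measurable_id.const_mul ε))).sub measurable_const)
    · rw [hasFiniteIntegral_iff_norm]
      have heq : ∫⁻ z, ENNReal.ofReal ‖ρ z • (B (u - ε*z) ω - B 0 ω)‖ ∂ν
          = ∫⁻ z, F (ω, z) ∂ν := by
        refine lintegral_congr fun z => ?_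
        rw [hF, norm_smul, Real.norm_of_nonneg (hρ0 z)]
      rw [heq]
      exact hω
  -- a.e. increment identity
  have hid : ∀ (ε s t : ℝ), ∀ᵐ ω ∂P,
      Integrable (fun z => ρ z • (B (t - ε*z) ω - B (s - ε*z) ω)) ν ∧
      Bε ε t ω - Bε ε s ω
        = ∫ z in Set.Icc (0:ℝ) 1, ρ z • (B (t - ε*z) ω - B (s - ε*z) ω) := by
    intro ε s t
    filter_upwards [haegood t ε, haegood s ε] with ω ht hs
    obtain ⟨hint, heq⟩ := moll_increment B ρ hρz hρi hρint1 ε s t ω ht hs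
    refine ⟨hint, ?_⟩
    rw [hBε ε t ω, hBε ε s ω, sub_sub_sub_cancel_right, heq]
  refine ⟨⟨(d:ℝ), ?_⟩, ?_⟩
  · -- Part 1: uniform bound
    intro ε hε s t hst
    have hgoal : ∫ ω, ‖Bε ε t ω - Bε ε s ω‖ ^ 2 ∂P
        = ∫ ω, ‖∫ z in Set.Icc (0:ℝ) 1, ρ z • (B (t - ε*z) ω - B (s - ε*z) ω)‖ ^ 2 ∂P :=
      integral_congr_ae ((hid ε s t).mono fun ω h => by simp only [h.2])
    rw [hgoal]
    refine key_lemma P (fun z ω => B (t - ε*z) ω - B (s - ε*z) ω) ?_ ρ hρm hρ0 hρ2 hρint1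
      ((d:ℝ) * (t - s)) (mul_nonneg (Nat.cast_nonneg d) (sub_nonneg.2 hst)) (fun z _ => hL2 _ _) ?_
    · exact (hBmeas.comp ((measurable_const.sub (measurable_fst.const_mul ε)).prodMk
        measurable_snd)).sub
        (hBmeas.comp ((measurable_const.sub (measurable_fst.const_mul ε)).prodMk
          measurable_snd))
    · intro z _
      rw [hB2 (s - ε*z) (t - ε*z)]
      have e : t - ε*z - (s - ε*z) = t - s := by ring
      rw [e, abs_of_nonneg (sub_nonneg.2 hst)]
  · -- Part 2: convergence
    intro s t hst
    have hbd2 : ∀ ε ∈ Set.Ioi (0:ℝ),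
        ∫ ω, ‖(Bε ε t ω - Bε ε s ω) - (B t ω - B s ω)‖ ^ 2 ∂P ≤ 4 * d * ε := by
      intro ε hε
      have hε' : (0:ℝ) < ε := hε
      have hid2 : ∀ᵐ ω ∂P, (Bε ε t ω - Bε ε s ω) - (B t ω - B s ω)
          = ∫ z in Set.Icc (0:ℝ) 1,
              ρ z • ((B (t - ε*z) ω - B (s - ε*z) ω) - (B t ω - B s ω)) := by
        filter_upwards [hid ε s t] with ω hω
        obtain ⟨hint, heq⟩ := hω
        rw [heq]
        have hconst : (∫ z in Set.Icc (0:ℝ) 1, ρ z • (B t ω - B s ω)) = B t ω - B s ω := by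
          rw [integral_smul_const, hρint1, one_smul]
        calc (∫ z in Set.Icc (0:ℝ) 1, ρ z • (B (t - ε*z) ω - B (s - ε*z) ω))
              - (B t ω - B s ω)
            = (∫ z in Set.Icc (0:ℝ) 1, ρ z • (B (t - ε*z) ω - B (s - ε*z) ω))
              - ∫ z in Set.Icc (0:ℝ) 1, ρ z • (B t ω - B s ω) := by rw [hconst]
          _ = ∫ z in Set.Icc (0:ℝ) 1,
                (ρ z • (B (t - ε*z) ω - B (s - ε*z) ω) - ρ z • (B t ω - B s ω)) :=
              (integral_sub hint (hρi.smul_const _)).symm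
          _ = ∫ z in Set.Icc (0:ℝ) 1,
                ρ z • ((B (t - ε*z) ω - B (s - ε*z) ω) - (B t ω - B s ω)) :=
              integral_congr_ae (Filter.Eventually.of_forall fun z =>
                (smul_sub (ρ z) _ _).symm)
      rw [integral_congr_ae (hid2.mono fun ω h => by rw [h])]
      have hYm : Measurable (Function.uncurry
          (fun z ω => (B (t - ε*z) ω - B (s - ε*z) ω) - (B t ω - B s ω))) := by
        refine Measurable.sub (Measurable.sub ?_ ?_) (Measurable.sub ?_ ?_)
        · exact hBmeas.comp ((measurable_const.sub (measurable_fst.const_mul ε)).prodMk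
            measurable_snd)
        · exact hBmeas.comp ((measurable_const.sub (measurable_fst.const_mul ε)).prodMk
            measurable_snd)
        · exact (hBsec t).comp measurable_snd
        · exact (hBsec s).comp measurable_snd
      have hYrw : ∀ z (ω : Ω), (B (t - ε*z) ω - B (s - ε*z) ω) - (B t ω - B s ω)
          = (B (t - ε*z) ω - B t ω) - (B (s - ε*z) ω - B s ω) := by
        intro z ω; abel
      have hYint : ∀ z ∈ Set.Icc (0:ℝ) 1, Integrable
          (fun ω => ‖(B (t - ε*z) ω - B (s - ε*z) ω) - (B t ω - B s ω)‖ ^ 2) P := by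
        intro z _
        refine (((hL2 (t - ε*z) t).const_mul 2).add
          ((hL2 (s - ε*z) s).const_mul 2)).mono' ?_ ?_
        · exact ((((hBsec _).sub (hBsec _)).sub ((hBsec t).sub (hBsec s))).norm.pow_const
            2).aestronglyMeasurable
        · refine Filter.Eventually.of_forall fun ω => ?_
          simp only [Pi.add_apply]
          rw [Real.norm_of_nonneg (sq_nonneg _), hYrw z ω]
          have h1 := norm_sub_le (B (t - ε*z) ω - B t ω) (B (s - ε*z) ω - B s ω)
          nlinarith [norm_nonneg (B (t - ε*z) ω - B t ω),
            norm_nonneg (B (s - ε*z) ω - B s ω),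
            sq_nonneg (‖B (t - ε*z) ω - B t ω‖ - ‖B (s - ε*z) ω - B s ω‖),
            norm_nonneg ((B (t - ε*z) ω - B t ω) - (B (s - ε*z) ω - B s ω))]
      have hYbd : ∀ z ∈ Set.Icc (0:ℝ) 1,
          ∫ ω, ‖(B (t - ε*z) ω - B (s - ε*z) ω) - (B t ω - B s ω)‖ ^ 2 ∂P
            ≤ 4 * d * ε := by
        intro z hz
        have h1 : ∫ ω, ‖(B (t - ε*z) ω - B (s - ε*z) ω) - (B t ω - B s ω)‖ ^ 2 ∂P
            ≤ ∫ ω, (2 * ‖B (t - ε*z) ω - B t ω‖ ^ 2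
                + 2 * ‖B (s - ε*z) ω - B s ω‖ ^ 2) ∂P := by
          refine integral_mono (hYint z hz)
            (((hL2 (t - ε*z) t).const_mul 2).add ((hL2 (s - ε*z) s).const_mul 2))
            fun ω => ?_
          simp only [Pi.add_apply]
          rw [hYrw z ω]
          have h2 := norm_sub_le (B (t - ε*z) ω - B t ω) (B (s - ε*z) ω - B s ω)
          nlinarith [norm_nonneg (B (t - ε*z) ω - B t ω),
            norm_nonneg (B (s - ε*z) ω - B s ω),
            sq_nonneg (‖B (t - ε*z) ω - B t ω‖ - ‖B (s - ε*z) ω - B s ω‖),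
            norm_nonneg ((B (t - ε*z) ω - B t ω) - (B (s - ε*z) ω - B s ω))]
        rw [integral_add ((hL2 _ _).const_mul 2) ((hL2 _ _).const_mul 2),
          integral_const_mul, integral_const_mul, hB2 t (t - ε*z), hB2 s (s - ε*z)] at h1
        have e1 : t - ε*z - t = -(ε*z) := by ring
        have e2 : s - ε*z - s = -(ε*z) := by ring
        rw [e1, e2, abs_neg, abs_of_nonneg (mul_nonneg hε'.le hz.1)] at h1
        have hd' : (0:ℝ) ≤ d := Nat.cast_nonneg d
        nlinarith [hz.1, hz.2, mul_nonneg hd' hε'.le, mul_nonneg hd' (mul_nonneg hε'.le hz.1)]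
      exact key_lemma P _ hYm ρ hρm hρ0 hρ2 hρint1 (4 * d * ε) (by positivity) hYint hYbd
    have h0 : ∀ ε : ℝ, 0 ≤ ∫ ω, ‖(Bε ε t ω - Bε ε s ω) - (B t ω - B s ω)‖ ^ 2 ∂P :=
      fun ε => integral_nonneg fun ω => sq_nonneg _
    refine squeeze_zero' (g := fun ε : ℝ => 4 * (d:ℝ) * ε)
      (Filter.Eventually.of_forall h0) ?_ ?_
    · exact eventually_nhdsWithin_of_forall hbd2
    · have h1 : Tendsto (fun ε : ℝ => 4 * (d:ℝ) * ε) (nhds 0) (nhds 0) := by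
        have h2 : Continuous (fun ε : ℝ => 4 * (d:ℝ) * ε) := continuous_const.mul continuous_id
        simpa using h2.tendsto 0
      exact h1.mono_left nhdsWithin_le_nhds
end

section
/- Let B^ε be the mollification of a two-sided Brownian motion B as above. Then the pathwise identity ∫_s^t B^ε_{s−r, u−r} ⊗ dB^ε_u = ∫_ℝ ρ(z) ( ∫_{s−εz}^{t−εz} B^ε_{s−r, u+εz−r} ⊗ dB_u ) dz holds almost surely, where the left integral is a Riemann–Stieltjes integral against the smooth path B^ε and the inner right integrals are Young integrals of the smooth path against the Hölder path B. -/
open MeasureTheory intervalIntegral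

open scoped Convolution

/-- pathwise identity for the mollified Brownian motion
`B^ε_t = ∫ B_{t−εz} ρ(z) dz`: almost surely, componentwise,
`∫_s^t B^ε_{s−r,u−r} ⊗ dB^ε_u = ∫ ρ(z) ( ∫_{s−εz}^{t−εz} B^ε_{s−r,u+εz−r} ⊗ dB_u ) dz`,
where the left-hand side is the Riemann–Stieltjes integral against the smooth path `B^ε`
(written via its derivative) and the inner right-hand integrals are Young integrals of the
smooth path against the Hölder path `B`, written in integration-by-parts form
`g(t−εz)B_{t−εz} − g(s−εz)B_{s−εz} − ∫ g' B` (note `g(s−εz) = 0`). -/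
theorem stmt17 {Ω : Type*} [MeasurableSpace Ω] (P : Measure Ω) [IsProbabilityMeasure P]
    (d : ℕ) (hd : 1 ≤ d) (r : ℝ) (hr : 0 < r) (ε : ℝ) (hε : ε ∈ Set.Ioc (0:ℝ) 1)
    (B : ℝ → Ω → (Fin d → ℝ))
    (hBmeas : Measurable (Function.uncurry B))
    (hBcont : ∀ ω, Continuous (fun t => B t ω))
    (ρ : ℝ → ℝ) (hρsmooth : ContDiff ℝ (⊤ : ℕ∞) ρ)
    (hρrange : ∀ z, ρ z ∈ Set.Icc (0:ℝ) 2)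
    (hρsupp : Function.support ρ ⊆ Set.Icc (0:ℝ) 1)
    (hρint : ∫ z, ρ z = 1)
    (Bε : ℝ → Ω → (Fin d → ℝ))
    (hBε : ∀ t ω, Bε t ω = ∫ z : ℝ, ρ z • B (t - ε * z) ω) :
    ∀ᵐ ω ∂P, ∀ s t : ℝ, s ≤ t → ∀ i j : Fin d,
      (∫ u in s..t, (Bε (u - r) ω i - Bε (s - r) ω i) * deriv (fun v => Bε v ω j) u)
      = ∫ z : ℝ, ρ z *
          ((Bε (t - r) ω i - Bε (s - r) ω i) * B (t - ε * z) ω j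
            - (Bε (s - r) ω i - Bε (s - r) ω i) * B (s - ε * z) ω j
            - ∫ u in (s - ε * z)..(t - ε * z),
                deriv (fun v => Bε (v + ε * z - r) ω i) u * B u ω j) := by
  obtain ⟨hε0, hε1⟩ := hε
  have hρc : Continuous ρ := hρsmooth.continuous
  refine ae_of_all _ fun ω => ?_
  intro s t hst i j
  set C : ℝ → (Fin d → ℝ) := fun u => B u ω with hCdef
  have hCB : ∀ u, B u ω = C u := fun u => by rw [hCdef]
  have hCc : Continuous C := hBcont ω
  -- the rescaled mollifier
  set ρε : ℝ → ℝ := fun y => ε⁻¹ * ρ (ε⁻¹ * y) with hρεdef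
  have hone : (1 : WithTop ℕ∞) ≤ ((⊤ : ℕ∞) : WithTop ℕ∞) := by exact_mod_cast le_top
  have hρεs : ContDiff ℝ ((⊤ : ℕ∞) : WithTop ℕ∞) ρε :=
    contDiff_const.mul ((hρsmooth.of_le (by simp)).comp (contDiff_const.mul contDiff_id))
  have hρε0 : ∀ y, y ∉ Set.Icc (0:ℝ) 1 → ρε y = 0 := by
    intro y hy
    have h0 : ρ (ε⁻¹ * y) = 0 := by
      by_contra h
      obtain ⟨h1, h2⟩ := hρsupp h
      have hy' : y = ε * (ε⁻¹ * y) := by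
        rw [mul_inv_cancel_left₀ (ne_of_gt hε0)]
      refine hy ⟨?_, ?_⟩
      · rw [hy']; exact mul_nonneg hε0.le h1
      · calc y = ε * (ε⁻¹ * y) := hy'
          _ ≤ ε * 1 := by exact mul_le_mul_of_nonneg_left h2 hε0.le
          _ ≤ 1 := by linarith
    rw [hρεdef]; simp [h0]
  have hρεsupp : HasCompactSupport ρε :=
    HasCompactSupport.intro isCompact_Icc hρε0
  -- the mollified path as a convolution
  set φ : ℝ → (Fin d → ℝ) := ρε ⋆[ContinuousLinearMap.lsmul ℝ ℝ, volume] C with hφdef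
  have hφeq : ∀ u, φ u = ∫ y : ℝ, ρε y • C (u - y) := fun u => rfl
  have hφs : ContDiff ℝ ((⊤ : ℕ∞) : WithTop ℕ∞) φ :=
    hρεsupp.contDiff_convolution_left _ hρεs hCc.locallyIntegrable
  have hconv : ∀ u, Bε u ω = φ u := by
    intro u
    rw [hBε]
    have h1 : (fun z : ℝ => ρ z • B (u - ε * z) ω)
        = fun z : ℝ => (fun y : ℝ => ρ (ε⁻¹ * y) • C (u - y)) (ε * z) := by
      funext z
      simp only [hCB]
      rw [inv_mul_cancel_left₀ (ne_of_gt hε0)]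
    rw [h1, MeasureTheory.Measure.integral_comp_mul_left
      (fun y : ℝ => ρ (ε⁻¹ * y) • C (u - y)) ε]
    rw [hφeq u, abs_of_pos (inv_pos.2 hε0), ← MeasureTheory.integral_smul]
    congr 1
    funext y
    rw [smul_smul, hρεdef]
  have hφi : ContDiff ℝ ((⊤ : ℕ∞) : WithTop ℕ∞) (fun u => φ u i) :=
    (ContinuousLinearMap.proj i : (Fin d → ℝ) →L[ℝ] ℝ).contDiff.comp hφs
  have hφj : ContDiff ℝ ((⊤ : ℕ∞) : WithTop ℕ∞) (fun u => φ u j) :=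
    (ContinuousLinearMap.proj j : (Fin d → ℝ) →L[ℝ] ℝ).contDiff.comp hφs
  have hgIc : Continuous (deriv (fun u => φ u i)) := hφi.continuous_deriv hone
  have hgJc : Continuous (deriv (fun u => φ u j)) := hφj.continuous_deriv hone
  have hdi : ∀ x, HasDerivAt (fun u => φ u i) (deriv (fun u => φ u i) x) x :=
    fun x => (hφi.differentiable (ne_of_gt (lt_of_lt_of_le zero_lt_one hone)) x).hasDerivAt
  have hdj : ∀ x, HasDerivAt (fun u => φ u j) (deriv (fun u => φ u j) x) x :=
    fun x => (hφj.differentiable (ne_of_gt (lt_of_lt_of_le zero_lt_one hone)) x).hasDerivAt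
  -- integration by parts for the left-hand side
  have hLHS : (∫ x in s..t, (φ (x - r) i - φ (s - r) i) * deriv (fun v => φ v j) x)
      = (φ (t - r) i - φ (s - r) i) * φ t j
        - ∫ x in s..t, deriv (fun u => φ u i) (x - r) * φ x j := by
    have hu : ∀ x ∈ Set.uIcc s t,
        HasDerivAt (fun u : ℝ => φ (u - r) i - φ (s - r) i)
          (deriv (fun u => φ u i) (x - r)) x := by
      intro x _
      have h1 : HasDerivAt (fun u : ℝ => u - r) 1 x := (hasDerivAt_id x).sub_const r
      have h2 := (hdi (x - r)).comp x h1
      simp only [mul_one] at h2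
      have h3 : HasDerivAt (fun u : ℝ => φ (u - r) i) (deriv (fun u => φ u i) (x - r)) x := by
        exact h2
      simpa using h3.sub_const (φ (s - r) i)
    have hv : ∀ x ∈ Set.uIcc s t,
        HasDerivAt (fun u => φ u j) (deriv (fun u => φ u j) x) x := fun x _ => hdj x
    have hu' : IntervalIntegrable (fun x => deriv (fun u => φ u i) (x - r)) volume s t :=
      (hgIc.comp (continuous_id.sub continuous_const)).intervalIntegrable s t
    have hv' : IntervalIntegrable (deriv (fun u => φ u j)) volume s t :=
      hgJc.intervalIntegrable s t
    have h := intervalIntegral.integral_mul_deriv_eq_deriv_mul hu hv hu' hv'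
    simpa [sub_self] using h
  -- pointwise identification of the inner integral on the right-hand side
  have hinner : ∀ z : ℝ,
      (∫ u in (s - ε * z)..(t - ε * z), deriv (fun v => φ (v + ε * z - r) i) u * C u j)
      = ∫ x in s..t, deriv (fun u => φ u i) (x - r) * C (x - ε * z) j := by
    intro z
    have h1 : ∀ u : ℝ, deriv (fun v => φ (v + ε * z - r) i) u
        = deriv (fun u => φ u i) (u + ε * z - r) := by
      intro u
      have hd0 : HasDerivAt (fun v : ℝ => v + ε * z - r) 1 u := by
        simpa using ((hasDerivAt_id u).add_const (ε * z)).sub_const r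
      have h2 := (hdi (u + ε * z - r)).comp u hd0
      simp only [mul_one] at h2
      exact HasDerivAt.deriv h2
    rw [intervalIntegral.integral_congr
      (g := fun u => deriv (fun u => φ u i) (u + ε * z - r) * C u j) (fun u _ => by rw [h1 u])]
    rw [← intervalIntegral.integral_comp_sub_right
      (fun u => deriv (fun u => φ u i) (u + ε * z - r) * C u j) (ε * z)]
    apply intervalIntegral.integral_congr
    intro x _
    show deriv (fun u => φ u i) (x - ε * z + ε * z - r) * C (x - ε * z) j = _
    have hx : x - ε * z + ε * z - r = x - r := by ring
    rw [hx]
  -- the product function for Fubini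
  set H : ℝ × ℝ → ℝ :=
    fun p => ρ p.1 * (deriv (fun u => φ u i) (p.2 - r) * C (p.2 - ε * p.1) j) with hHdef
  have hHc : Continuous H := by
    refine (hρc.comp continuous_fst).mul (Continuous.mul ?_ ?_)
    · exact hgIc.comp (continuous_snd.sub continuous_const)
    · exact (continuous_apply j).comp
        (hCc.comp (continuous_snd.sub (continuous_const.mul continuous_fst)))
  obtain ⟨M, hM⟩ := (isCompact_Icc.prod isCompact_Icc :
      IsCompact (Set.Icc (0:ℝ) 1 ×ˢ Set.Icc s t)).exists_bound_of_continuousOn hHc.continuousOn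
  have hbint : Integrable ((Set.Icc (0:ℝ) 1 ×ˢ (Set.univ : Set ℝ)).indicator fun _ => M)
      (volume.prod (volume.restrict (Set.Ioc s t))) := by
    rw [integrable_indicator_iff (measurableSet_Icc.prod MeasurableSet.univ)]
    refine integrableOn_const (ne_of_lt ?_)
    rw [Measure.prod_prod]
    refine ENNReal.mul_lt_top ?_ ?_
    · simp [Real.volume_Icc]
    · rw [Measure.restrict_apply_univ]
      simp [Real.volume_Ioc]
  have haep : ∀ᵐ p : ℝ × ℝ ∂(volume.prod (volume.restrict (Set.Ioc s t))),
      p.2 ∈ Set.Ioc s t := by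
    rw [MeasureTheory.ae_iff]
    have hset : {p : ℝ × ℝ | ¬ p.2 ∈ Set.Ioc s t} = Set.univ ×ˢ (Set.Ioc s t)ᶜ := by
      ext p; simp
    rw [hset, Measure.prod_prod, Measure.restrict_apply measurableSet_Ioc.compl]
    simp
  have hHint : Integrable H (volume.prod (volume.restrict (Set.Ioc s t))) := by
    refine Integrable.mono' hbint hHc.aestronglyMeasurable ?_
    filter_upwards [haep] with p hp
    by_cases h1 : p.1 ∈ Set.Icc (0:ℝ) 1
    · rw [Set.indicator_of_mem (Set.mem_prod.2 ⟨h1, Set.mem_univ _⟩)]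
      exact hM p ⟨h1, ⟨hp.1.le, hp.2⟩⟩
    · rw [Set.indicator_of_notMem (fun hmem => h1 hmem.1)]
      have h0 : ρ p.1 = 0 := by by_contra h; exact h1 (hρsupp h)
      simp [hHdef, h0]
  -- componentwise identification of the mollification
  have hcompInt : ∀ x : ℝ, Integrable (fun z => ρ z • C (x - ε * z)) volume := by
    intro x
    refine Continuous.integrable_of_hasCompactSupport
      (hρc.smul (hCc.comp (continuous_const.sub (continuous_const.mul continuous_id)))) ?_
    refine HasCompactSupport.intro (isCompact_Icc (a := (0:ℝ)) (b := 1)) (fun z hz => ?_)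
    have h0 : ρ z = 0 := by by_contra h; exact hz (hρsupp h)
    simp [h0]
  have hcomp : ∀ x : ℝ, (∫ z : ℝ, ρ z * C (x - ε * z) j) = φ x j := by
    intro x
    have h1 := (ContinuousLinearMap.proj j :
      (Fin d → ℝ) →L[ℝ] ℝ).integral_comp_comm (hcompInt x)
    simp only [ContinuousLinearMap.proj_apply, Pi.smul_apply, smul_eq_mul] at h1
    rw [h1]
    have h2 : (∫ z : ℝ, ρ z • C (x - ε * z)) = Bε x ω := by
      rw [hBε x ω]
    rw [h2, hconv x]
  -- value of the first piece
  have hT1 : Integrable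
      (fun z => ρ z * ((φ (t - r) i - φ (s - r) i) * C (t - ε * z) j)) volume := by
    refine Continuous.integrable_of_hasCompactSupport ?_ ?_
    · exact hρc.mul (continuous_const.mul ((continuous_apply j).comp
        (hCc.comp (continuous_const.sub (continuous_const.mul continuous_id)))))
    · refine HasCompactSupport.intro (isCompact_Icc (a := (0:ℝ)) (b := 1)) (fun z hz => ?_)
      have h0 : ρ z = 0 := by by_contra h; exact hz (hρsupp h)
      simp [h0]
  have hT1val : (∫ z : ℝ, ρ z * ((φ (t - r) i - φ (s - r) i) * C (t - ε * z) j))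
      = (φ (t - r) i - φ (s - r) i) * φ t j := by
    have h1 : (fun z : ℝ => ρ z * ((φ (t - r) i - φ (s - r) i) * C (t - ε * z) j))
        = fun z : ℝ => (φ (t - r) i - φ (s - r) i) * (ρ z * C (t - ε * z) j) := by
      funext z; ring
    rw [h1, MeasureTheory.integral_const_mul, hcomp t]
  -- pointwise rewriting of the integrand on the right-hand side
  have hpoint : ∀ z : ℝ,
      ρ z * ((φ (t - r) i - φ (s - r) i) * C (t - ε * z) j
        - (φ (s - r) i - φ (s - r) i) * C (s - ε * z) j
        - ∫ u in (s - ε * z)..(t - ε * z), deriv (fun v => φ (v + ε * z - r) i) u * C u j)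
      = ρ z * ((φ (t - r) i - φ (s - r) i) * C (t - ε * z) j)
        - ∫ x in Set.Ioc s t, H (z, x) := by
    intro z
    rw [hinner z, sub_self, zero_mul, sub_zero, mul_sub]
    congr 1
    rw [← intervalIntegral.integral_const_mul, intervalIntegral.integral_of_le hst]
  -- inner integral in `z` after swapping
  have hinner2 : ∀ x : ℝ, (∫ z : ℝ, H (z, x)) = deriv (fun u => φ u i) (x - r) * φ x j := by
    intro x
    have h1 : (fun z : ℝ => H (z, x))
        = fun z : ℝ => deriv (fun u => φ u i) (x - r) * (ρ z * C (x - ε * z) j) := by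
      funext z; rw [hHdef]; ring
    rw [h1, MeasureTheory.integral_const_mul, hcomp x]
  -- assemble the right-hand side
  have hRHS : (∫ z : ℝ, ρ z * ((φ (t - r) i - φ (s - r) i) * C (t - ε * z) j
        - (φ (s - r) i - φ (s - r) i) * C (s - ε * z) j
        - ∫ u in (s - ε * z)..(t - ε * z), deriv (fun v => φ (v + ε * z - r) i) u * C u j))
      = (φ (t - r) i - φ (s - r) i) * φ t j
        - ∫ x in s..t, deriv (fun u => φ u i) (x - r) * φ x j := by
    rw [MeasureTheory.integral_congr_ae (Filter.Eventually.of_forall hpoint)]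
    rw [MeasureTheory.integral_sub hT1 hHint.integral_prod_left, hT1val]
    rw [MeasureTheory.integral_integral_swap (f := fun z x => H (z, x)) hHint]
    simp only [hinner2]
    rw [intervalIntegral.integral_of_le hst]
  simp only [hCB, hconv]
  rw [hLHS, hRHS]
end
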